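/- arXiv:1402.4448 — 7 statements merged into one kernel-verified Lean document; each statement's English description precedes it below -/
import Mathlib

section
/- Fix u, v, w ∈ ℕ and weights α, β ∈ ℚ. Let G ∈ ℚ[[t]] be the formal power series whose coefficient of t^n is the sum of the weights α^a·β^b over all n-step walks in the triangle model starting at (u,v,w), where a and b are the numbers of steps of the walk in Ω′ and Ω″ respectively. Then (1−p)^3·(1−p^(u+v+w+3))·G = (1−p^3)·(1−p^(u+1))·(1−p^(v+1))·(1−p^(w+1)) in ℚ[[t]]. -/
open scoped Classical

/-- The directed sublattice step-set Ω′. -/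
def OmegaA : Finset (ℤ × ℤ × ℤ) := {(1,0,-1), (-1,1,0), (0,-1,1)}

/-- The directed sublattice step-set Ω″. -/
def OmegaB : Finset (ℤ × ℤ × ℤ) := {(1,-1,0), (-1,0,1), (0,1,-1)}

/-- The full step-set Ω₂ = Ω′ ∪ Ω″ of the triangle model. -/
def OmegaFull : Finset (ℤ × ℤ × ℤ) := OmegaA ∪ OmegaB

/-- Position after `i` steps of the walk with step sequence `s` starting at `start`. -/
def triPos (start : ℤ × ℤ × ℤ) {n : ℕ} (s : Fin n → ℤ × ℤ × ℤ) (i : ℕ) : ℤ × ℤ × ℤ :=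
  start + ∑ j ∈ Finset.univ.filter (fun j : Fin n => (j : ℕ) < i), s j

/-- All three coordinates nonnegative. -/
def nonneg3 (v : ℤ × ℤ × ℤ) : Prop := 0 ≤ v.1 ∧ 0 ≤ v.2.1 ∧ 0 ≤ v.2.2

/-- `n`-step walks of the triangle model starting at `start`, encoded by their step
sequences: every step lies in Ω₂ and every intermediate point lies in ℕ³. -/
noncomputable def triWalks (start : ℤ × ℤ × ℤ) (n : ℕ) : Finset (Fin n → ℤ × ℤ × ℤ) :=
  (Fintype.piFinset fun _ : Fin n => OmegaFull).filter
    (fun s => ∀ i ≤ n, nonneg3 (triPos start s i))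

/-- Number of steps of the walk lying in Ω′. -/
noncomputable def countA {n : ℕ} (s : Fin n → ℤ × ℤ × ℤ) : ℕ :=
  (Finset.univ.filter fun j => s j ∈ OmegaA).card

/-- Number of steps of the walk lying in Ω″. -/
noncomputable def countB {n : ℕ} (s : Fin n → ℤ × ℤ × ℤ) : ℕ :=
  (Finset.univ.filter fun j => s j ∈ OmegaB).card

/-! The walk series `G_y`, `y ∈ ℤ³`, vanish off `ℕ³` and satisfy `G_y = 1 + t ∑_z w(z) G_{y+z}`
on `ℕ³`, where `z` runs over the steps and `w(z)` is `α` or `β`. The closed form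
`K_y = (1-p³)(1-p^(y₁+1))(1-p^(y₂+1))(1-p^(y₃+1))` satisfies the same recursion up to the factor
`(1-p)³(1-p^(y₁+y₂+y₃+3))`, which is constant along walks because every step preserves the
coordinate sum: the `Ω′`- and `Ω″`-neighbour sums of `K_y` coincide, and what remains is a
polynomial identity in `p` once `t (α+β) = p / (1+p+p²)` is substituted. Hence the defects
`(1-p)³(1-p^(y₁+y₂+y₃+3)) G_y - K_y` satisfy the homogeneous recursion, so the ideal they span is
contained in `t` times itself, and therefore vanishes. -/

open PowerSeries

theorem PowerSeries.eq_bot_of_le_span_X_mul {R : Type*} [CommSemiring R] {I : Ideal R⟦X⟧}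
    (h : I ≤ Ideal.span {X} * I) : I = ⊥ := by
  have hpow : ∀ n, I ≤ Ideal.span {X ^ n} := fun n => by
    induction n with
    | zero => simp
    | succ n ih =>
      calc I ≤ Ideal.span {X} * I := h
        _ ≤ Ideal.span {X} * Ideal.span {X ^ n} := Ideal.mul_mono_right ih
        _ = Ideal.span {X ^ (n + 1)} := by rw [Ideal.span_singleton_mul_span_singleton, pow_succ']
  refine eq_bot_iff.mpr fun f hf => ?_
  ext m
  exact X_pow_dvd_iff.mp (Ideal.mem_span_singleton.mp (hpow (m + 1) hf)) m m.lt_succ_self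

namespace TriangleWalk

noncomputable def stepWeight (α β : ℚ) (z : ℤ × ℤ × ℤ) : ℚ :=
  (if z ∈ OmegaA then α else 1) * (if z ∈ OmegaB then β else 1)

lemma stepWeight_of_mem_OmegaA {α β : ℚ} {z : ℤ × ℤ × ℤ} (hz : z ∈ OmegaA) :
    stepWeight α β z = α := by
  have : z ∉ OmegaB := Finset.disjoint_left.mp (by decide) hz
  simp [stepWeight, hz, this]

lemma stepWeight_of_mem_OmegaB {α β : ℚ} {z : ℤ × ℤ × ℤ} (hz : z ∈ OmegaB) :
    stepWeight α β z = β := by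
  have : z ∉ OmegaA := Finset.disjoint_right.mp (by decide) hz
  simp [stepWeight, hz, this]

lemma pow_countA_mul_pow_countB (α β : ℚ) {n : ℕ} (s : Fin n → ℤ × ℤ × ℤ) :
    α ^ countA s * β ^ countB s = ∏ j, stepWeight α β (s j) := by
  rw [countA, countB, ← Finset.prod_const, ← Finset.prod_const, Finset.prod_filter,
    Finset.prod_filter, ← Finset.prod_mul_distrib]
  rfl

lemma sum_coords_eq_zero_of_mem_OmegaFull {z : ℤ × ℤ × ℤ} (hz : z ∈ OmegaFull) :
    z.1 + z.2.1 + z.2.2 = 0 := by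
  revert z; decide

lemma triPos_zero (x : ℤ × ℤ × ℤ) {n : ℕ} (s : Fin n → ℤ × ℤ × ℤ) : triPos x s 0 = x := by
  simp [triPos]

lemma triPos_succ (x : ℤ × ℤ × ℤ) {n : ℕ} (s : Fin (n + 1) → ℤ × ℤ × ℤ) (i : ℕ) :
    triPos x s (i + 1) = triPos (x + s 0) (Fin.tail s) i := by
  simp only [triPos, Finset.sum_filter, Fin.sum_univ_succ]
  simp [Fin.tail, add_assoc]

lemma triWalks_eq_empty {x : ℤ × ℤ × ℤ} (hx : ¬ nonneg3 x) (n : ℕ) : triWalks x n = ∅ :=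
  Finset.filter_false_of_mem fun s _ h => hx (triPos_zero x s ▸ h 0 n.zero_le)

lemma triWalks_zero {x : ℤ × ℤ × ℤ} (hx : nonneg3 x) : triWalks x 0 = Finset.univ := by
  refine Finset.eq_univ_of_forall fun s => Finset.mem_filter.mpr ⟨?_, fun i hi => ?_⟩
  · exact Fintype.mem_piFinset.mpr finZeroElim
  · rwa [Nat.le_zero.mp hi, triPos_zero]

lemma mem_triWalks_succ {x : ℤ × ℤ × ℤ} {n : ℕ} {s : Fin (n + 1) → ℤ × ℤ × ℤ} :
    s ∈ triWalks x (n + 1) ↔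
      nonneg3 x ∧ s 0 ∈ OmegaFull ∧ Fin.tail s ∈ triWalks (x + s 0) n := by
  simp only [triWalks, Finset.mem_filter, Fin.mem_piFinset_iff_zero_tail]
  constructor
  · rintro ⟨⟨h0, htail⟩, hpos⟩
    refine ⟨triPos_zero x s ▸ hpos 0 (Nat.zero_le _), h0, htail, fun i hi => ?_⟩
    exact triPos_succ x s i ▸ hpos (i + 1) (by omega)
  · rintro ⟨hx, h0, htail, hpos⟩
    refine ⟨⟨h0, htail⟩, fun i hi => ?_⟩
    rcases i with _ | i
    · rwa [triPos_zero]
    · exact (triPos_succ x s i).symm ▸ hpos i (by omega)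

lemma sum_triWalks_succ {M : Type*} [AddCommMonoid M] {x : ℤ × ℤ × ℤ} (hx : nonneg3 x) (n : ℕ)
    (f : (Fin (n + 1) → ℤ × ℤ × ℤ) → M) :
    ∑ s ∈ triWalks x (n + 1), f s =
      ∑ z ∈ OmegaFull, ∑ s ∈ triWalks (x + z) n, f (Fin.cons z s) := by
  rw [Finset.sum_sigma']
  refine Finset.sum_bij' (fun s _ => ⟨s 0, Fin.tail s⟩) (fun zs _ => Fin.cons zs.1 zs.2)
    (fun s hs => ?_) (fun zs hzs => ?_) (fun s _ => Fin.cons_self_tail s) (fun zs _ => ?_)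
    (fun s _ => by simp only [Fin.cons_self_tail])
  · obtain ⟨-, h0, htail⟩ := mem_triWalks_succ.mp hs
    exact Finset.mem_sigma.mpr ⟨h0, htail⟩
  · obtain ⟨h0, htail⟩ := Finset.mem_sigma.mp hzs
    exact mem_triWalks_succ.mpr ⟨hx, by simpa using h0, by simpa using htail⟩
  · simp

lemma sum_OmegaFull_stepWeight_mul (α β : ℚ) (g : ℤ × ℤ × ℤ → ℚ) :
    ∑ z ∈ OmegaFull, stepWeight α β z * g z =
      α * ∑ z ∈ OmegaA, g z + β * ∑ z ∈ OmegaB, g z := by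
  rw [OmegaFull, Finset.sum_union (by decide), Finset.mul_sum, Finset.mul_sum]
  congr 1 <;> refine Finset.sum_congr rfl fun z hz => ?_
  · rw [stepWeight_of_mem_OmegaA hz]
  · rw [stepWeight_of_mem_OmegaB hz]

noncomputable def walkGF (α β : ℚ) (x : ℤ × ℤ × ℤ) : ℚ⟦X⟧ :=
  mk fun n => ∑ s ∈ triWalks x n, α ^ countA s * β ^ countB s

lemma walkGF_eq_zero {x : ℤ × ℤ × ℤ} (hx : ¬ nonneg3 x) (α β : ℚ) : walkGF α β x = 0 := by
  ext n
  simp [walkGF, triWalks_eq_empty hx]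

lemma walkGF_eq_one_add_X_mul {x : ℤ × ℤ × ℤ} (hx : nonneg3 x) (α β : ℚ) :
    walkGF α β x = 1 + X * (C α * ∑ z ∈ OmegaA, walkGF α β (x + z) +
      C β * ∑ z ∈ OmegaB, walkGF α β (x + z)) := by
  ext (_ | n)
  · simp [walkGF, triWalks_zero hx, countA, countB]
  · rw [map_add, coeff_succ_X_mul, map_add, coeff_C_mul, coeff_C_mul, map_sum, map_sum,
      ← sum_OmegaFull_stepWeight_mul, coeff_one, if_neg n.succ_ne_zero, zero_add]
    simp only [walkGF, coeff_mk, pow_countA_mul_pow_countB, sum_triWalks_succ hx,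
      Fin.prod_univ_succ, Fin.cons_zero, Fin.cons_succ, Finset.mul_sum]

lemma exists_eq_natCast_of_nonneg3 {y : ℤ × ℤ × ℤ} (hy : nonneg3 y) :
    ∃ a b c : ℕ, y = ((a : ℤ), (b : ℤ), (c : ℤ)) := by
  obtain ⟨h1, h2, h3⟩ := hy
  exact ⟨y.1.toNat, y.2.1.toNat, y.2.2.toNat, by simp [h1, h2, h3]⟩

lemma toNat_natCast_add_one_add_one (n : ℕ) : ((n : ℤ) + 1 + 1).toNat = n + 2 := rfl

section ClosedForm

variable {R : Type*} [CommRing R] (p : R)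

/-- `(k + 1).toNat = 0` for `k < 0`, so this vanishes off `ℕ³`, where there are no walks. -/
def closedForm (y : ℤ × ℤ × ℤ) : R :=
  (1 - p ^ 3) * (1 - p ^ (y.1 + 1).toNat) * (1 - p ^ (y.2.1 + 1).toNat) *
    (1 - p ^ (y.2.2 + 1).toNat)

lemma closedForm_eq_zero {y : ℤ × ℤ × ℤ} (hy : ¬ nonneg3 y) : closedForm p y = 0 := by
  have : (y.1 + 1).toNat = 0 ∨ (y.2.1 + 1).toNat = 0 ∨ (y.2.2 + 1).toNat = 0 := by
    simp only [nonneg3, not_and_or, not_le] at hy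
    omega
  rcases this with h | h | h <;> simp [closedForm, h]

lemma closedForm_natCast (a b c : ℕ) :
    closedForm p ((a : ℤ), (b : ℤ), (c : ℤ)) =
      (1 - p ^ 3) * (1 - p ^ (a + 1)) * (1 - p ^ (b + 1)) * (1 - p ^ (c + 1)) := rfl

lemma sum_OmegaB_closedForm (a b c : ℕ) :
    ∑ z ∈ OmegaB, closedForm p (((a : ℤ), (b : ℤ), (c : ℤ)) + z) =
      ∑ z ∈ OmegaA, closedForm p (((a : ℤ), (b : ℤ), (c : ℤ)) + z) := by
  simp [OmegaA, OmegaB, closedForm, toNat_natCast_add_one_add_one]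
  ring

lemma mul_closedForm (a b c : ℕ) :
    (1 + p + p ^ 2) * closedForm p ((a : ℤ), (b : ℤ), (c : ℤ)) =
      (1 + p + p ^ 2) * (1 - p) ^ 3 * (1 - p ^ (a + b + c + 3)) +
        p * ∑ z ∈ OmegaA, closedForm p (((a : ℤ), (b : ℤ), (c : ℤ)) + z) := by
  simp [OmegaA, closedForm, toNat_natCast_add_one_add_one]
  ring

end ClosedForm

section Defect

variable {α β : ℚ} {p : ℚ⟦X⟧}

lemma closedForm_eq_add_X_mul (hp : p = C (α + β) * X * (1 + p + p ^ 2)) (a b c : ℕ) :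
    closedForm p ((a : ℤ), (b : ℤ), (c : ℤ)) = (1 - p) ^ 3 * (1 - p ^ (a + b + c + 3)) +
      X * (C α * ∑ z ∈ OmegaA, closedForm p (((a : ℤ), (b : ℤ), (c : ℤ)) + z) +
        C β * ∑ z ∈ OmegaB, closedForm p (((a : ℤ), (b : ℤ), (c : ℤ)) + z)) := by
  have hp0 : constantCoeff p = 0 := by rw [hp]; simp
  have hq : 1 + p + p ^ 2 ≠ 0 := fun h => by simpa [hp0] using congrArg constantCoeff h
  refine mul_left_cancel₀ hq ?_
  rw [sum_OmegaB_closedForm, mul_closedForm]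
  rw [map_add] at hp
  linear_combination (∑ z ∈ OmegaA, closedForm p (((a : ℤ), (b : ℤ), (c : ℤ)) + z)) * hp

variable (α β p)

noncomputable def defect (y : ℤ × ℤ × ℤ) : ℚ⟦X⟧ :=
  (1 - p) ^ 3 * (1 - p ^ ((y.1 + y.2.1 + y.2.2).toNat + 3)) * walkGF α β y - closedForm p y

lemma defect_eq_zero_of_not_nonneg3 {y : ℤ × ℤ × ℤ} (hy : ¬ nonneg3 y) :
    defect α β p y = 0 := by
  rw [defect, walkGF_eq_zero hy, closedForm_eq_zero p hy, mul_zero, sub_zero]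

variable {α β p}

lemma defect_eq_X_mul (hp : p = C (α + β) * X * (1 + p + p ^ 2)) (a b c : ℕ) :
    defect α β p ((a : ℤ), (b : ℤ), (c : ℤ)) =
      X * (C α * ∑ z ∈ OmegaA, defect α β p (((a : ℤ), (b : ℤ), (c : ℤ)) + z) +
        C β * ∑ z ∈ OmegaB, defect α β p (((a : ℤ), (b : ℤ), (c : ℤ)) + z)) := by
  set y : ℤ × ℤ × ℤ := ((a : ℤ), (b : ℤ), (c : ℤ))
  set level := (1 - p) ^ 3 * (1 - p ^ (a + b + c + 3))
  have hy : nonneg3 y := ⟨by positivity, by positivity, by positivity⟩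
  have hstep : ∀ z ∈ OmegaFull,
      defect α β p (y + z) = level * walkGF α β (y + z) - closedForm p (y + z) := by
    intro z hz
    have hz0 := sum_coords_eq_zero_of_mem_OmegaFull hz
    have hlevel : ((y + z).1 + (y + z).2.1 + (y + z).2.2).toNat = a + b + c := by
      simp only [y, Prod.fst_add, Prod.snd_add]
      omega
    rw [defect, hlevel]
  rw [Finset.sum_congr rfl fun z hz => hstep z (Finset.mem_union_left _ hz),
    Finset.sum_congr rfl fun z hz => hstep z (Finset.mem_union_right _ hz),
    defect, walkGF_eq_one_add_X_mul hy, closedForm_eq_add_X_mul hp]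
  simp only [Finset.sum_sub_distrib, ← Finset.mul_sum]
  have hy_level : ((a : ℤ) + b + c).toNat = a + b + c := by omega
  rw [hy_level]
  ring

lemma defect_mem_span_X_mul (hp : p = C (α + β) * X * (1 + p + p ^ 2)) (y : ℤ × ℤ × ℤ) :
    defect α β p y ∈ Ideal.span {X} * Ideal.span (Set.range (defect α β p)) := by
  by_cases hy : nonneg3 y
  · obtain ⟨a, b, c, rfl⟩ := exists_eq_natCast_of_nonneg3 hy
    have hmem : ∀ (r : ℚ⟦X⟧) (S : Finset (ℤ × ℤ × ℤ)) (f : ℤ × ℤ × ℤ → ℤ × ℤ × ℤ),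
        r * ∑ z ∈ S, defect α β p (f z) ∈ Ideal.span (Set.range (defect α β p)) :=
      fun r S f => Ideal.mul_mem_left _ r
        (Ideal.sum_mem _ fun z _ => Ideal.subset_span ⟨f z, rfl⟩)
    rw [defect_eq_X_mul hp]
    exact Ideal.mul_mem_mul (Ideal.mem_span_singleton_self X)
      (Ideal.add_mem _ (hmem _ _ _) (hmem _ _ _))
  · rw [defect_eq_zero_of_not_nonneg3 α β p hy]
    exact zero_mem _

lemma defect_eq_zero (hp : p = C (α + β) * X * (1 + p + p ^ 2)) (y : ℤ × ℤ × ℤ) :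
    defect α β p y = 0 := by
  have hspan : Ideal.span (Set.range (defect α β p)) = ⊥ :=
    eq_bot_of_le_span_X_mul <| Ideal.span_le.mpr <| Set.range_subset_iff.mpr <|
      defect_mem_span_X_mul hp
  rw [← Ideal.mem_bot, ← hspan]
  exact Ideal.subset_span ⟨y, rfl⟩

end Defect

end TriangleWalk

open TriangleWalk

theorem triangle_weighted_gf_general (u v w : ℕ) (α β : ℚ) (p : PowerSeries ℚ)
    (hp : p = PowerSeries.C (α + β) * PowerSeries.X * (1 + p + p ^ 2)) :
    (1 - p) ^ 3 * (1 - p ^ (u + v + w + 3)) *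
        (PowerSeries.mk fun n =>
          ∑ s ∈ triWalks ((u : ℤ), (v : ℤ), (w : ℤ)) n, α ^ countA s * β ^ countB s)
      = (1 - p ^ 3) * (1 - p ^ (u + 1)) * (1 - p ^ (v + 1)) * (1 - p ^ (w + 1)) := by
  have h := defect_eq_zero hp ((u : ℤ), (v : ℤ), (w : ℤ))
  rw [defect, sub_eq_zero, closedForm_natCast] at h
  have hlevel : ((u : ℤ) + v + w).toNat = u + v + w := by omega
  rwa [hlevel] at h

/-- The weighted generating function of triangle-model walks starting at
`(u,v,w)` satisfies the closed form of Theorem 1 of Mortimer–Prellberg. -/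
theorem triangle_weighted_gf (u v w : ℕ) (α β : ℚ) (p : PowerSeries ℚ)
    (hp0 : PowerSeries.constantCoeff p = 0)
    (hp : p = PowerSeries.C (α + β) * PowerSeries.X * (1 + p + p ^ 2)) :
    (1 - p) ^ 3 * (1 - p ^ (u + v + w + 3)) *
        (PowerSeries.mk fun n =>
          ∑ s ∈ triWalks ((u : ℤ), (v : ℤ), (w : ℤ)) n, α ^ countA s * β ^ countB s)
      = (1 - p ^ 3) * (1 - p ^ (u + 1)) * (1 - p ^ (v + 1)) * (1 - p ^ (w + 1)) :=
  triangle_weighted_gf_general u v w α β p hp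
end

section
/- Fix H, a, b ∈ ℕ and set L = 2H+1 and n = a+b. The number of n-step walks in the triangle model starting at (L,0,0) that take exactly a steps in Ω′ and exactly b steps in Ω″ equals the number of two-coloured Motzkin paths of length n in a strip of height H having exactly a steps coloured A and exactly b steps coloured B. -/
/-!
Fix the colour word of a walk, i.e. which of its steps lie in Ω′ and which in Ω″. From a point
`(x, y, z)` with `x + y + z = 2H + 1`, the walks following a given word of length `n` number
`∑_{h=0}^{H} Q_h(x, y) M_n(h)`, where `M_n(h)` counts the Motzkin paths of length `n` in the strip
`[0, H]` from height `h` down to `0`, and `Q_h(x, y) = N_h(x, y) - N_{2H+2-h}(x, y)` with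
`N_h(x, y)` the number of lattice points on the diagonal `i + j = h` of `[0, x] × [0, y]`
(`stripWeight` and `diagCount` below). The induction on `n` works because each of Ω′, Ω″ maps
`Q_h` to `Q_{h-1} + Q_h + Q_{h+1}`, the transfer operator of the strip, which is symmetric; and
`Q` vanishes just outside the triangle. At the corner `Q_h(2H+1, 0) = [h = 0]`, so every word is
followed by exactly `M_n(0)` walks, and summing over the words with `a` letters A and `b` letters
B gives the two-coloured Motzkin paths.
-/

open scoped Classical

/-- A Motzkin path of length `n` in a strip of height `H`: a sequence of heights starting
and ending at `0`, staying in `[0, H]`, with increments in `{-1, 0, 1}`. -/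
def IsMotzkin (H n : ℕ) (h : Fin (n + 1) → ℤ) : Prop :=
  h 0 = 0 ∧ h (Fin.last n) = 0 ∧ (∀ i, 0 ≤ h i ∧ h i ≤ (H : ℤ)) ∧
    ∀ i : Fin n, h i.succ - h i.castSucc ∈ ({-1, 0, 1} : Set ℤ)

/-- The path has no level step at height `H`. -/
def NoLevelAtTop (H n : ℕ) (h : Fin (n + 1) → ℤ) : Prop :=
  ∀ i : Fin n, ¬(h i.castSucc = (H : ℤ) ∧ h i.succ = (H : ℤ))

open Finset

def tridiag {R : Type*} [Add R] (f : ℤ → R) (h : ℤ) : R := f (h - 1) + f h + f (h + 1)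

lemma sum_Icc_shift {M : Type*} [AddCommMonoid M] (φ : ℤ → ℤ → M) {a b : ℤ}
    (ha : φ (a - 1) a = 0) (hb : φ b (b + 1) = 0) :
    ∑ h ∈ Icc a b, φ (h - 1) h = ∑ h ∈ Icc a b, φ h (h + 1) := by
  calc ∑ h ∈ Icc a b, φ (h - 1) h = ∑ h ∈ Icc (a - 1) (b - 1), φ h (h + 1) := by
        rw [show Icc a b = (Icc (a - 1) (b - 1)).map (addRightEmbedding 1) by simp, sum_map]
        simp
    _ = ∑ h ∈ Icc (a - 1) b, φ h (h + 1) := by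
        refine sum_subset (Icc_subset_Icc_right (by omega)) fun h hh hn => ?_
        obtain rfl : h = b := by simp only [mem_Icc] at hh hn; omega
        exact hb
    _ = ∑ h ∈ Icc a b, φ h (h + 1) := by
        refine (sum_subset (Icc_subset_Icc_left (by omega)) fun h hh hn => ?_).symm
        obtain rfl : h = a - 1 := by simp only [mem_Icc] at hh hn; omega
        simpa using ha

lemma sum_Icc_tridiag_mul {R : Type*} [NonUnitalNonAssocSemiring R] (f g : ℤ → R) {a b : ℤ}
    (hfa : f (a - 1) = 0) (hfb : f (b + 1) = 0) (hga : g (a - 1) = 0) (hgb : g (b + 1) = 0) :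
    ∑ h ∈ Icc a b, tridiag f h * g h = ∑ h ∈ Icc a b, f h * tridiag g h := by
  have h₁ := sum_Icc_shift (fun k l => f k * g l) (a := a) (b := b) (by simp [hfa]) (by simp [hgb])
  have h₂ := sum_Icc_shift (fun k l => f l * g k) (a := a) (b := b) (by simp [hga]) (by simp [hfb])
  simp only [tridiag, add_mul, mul_add, sum_add_distrib] at h₁ h₂ ⊢
  rw [h₁, ← h₂]
  abel

lemma card_filter_piFinset_succ {β : Type*} {n : ℕ} (S : Fin (n + 1) → Finset β)
    (P : (Fin (n + 1) → β) → Prop) [DecidablePred P] :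
    #{s ∈ Fintype.piFinset S | P s} =
      ∑ v ∈ S 0, #{t ∈ Fintype.piFinset (Fin.tail S) | P (Fin.cons v t)} := by
  have hS : Fintype.piFinset S =
      (S 0 ×ˢ Fintype.piFinset (Fin.tail S)).map (Fin.consEquiv fun _ => β).toEmbedding := by
    simpa using filter_piFinset_eq_map_consEquiv S (fun _ => True)
  simp only [hS, card_filter, sum_map, sum_product]
  rfl

section Walks

variable {α : Type*} [AddCommMonoid α]

def walkPos {n : ℕ} (x : α) (s : Fin n → α) (i : ℕ) : α :=
  x + ∑ j ∈ univ.filter (fun j : Fin n => (j : ℕ) < i), s j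

lemma triPos_eq_walkPos (start : ℤ × ℤ × ℤ) {n : ℕ} (s : Fin n → ℤ × ℤ × ℤ) :
    triPos start s = walkPos start s := rfl

@[simp]
lemma walkPos_zero {n : ℕ} (x : α) (s : Fin n → α) : walkPos x s 0 = x := by
  simp [walkPos]

lemma walkPos_cons_succ {n : ℕ} (x v : α) (t : Fin n → α) (i : ℕ) :
    walkPos x (Fin.cons v t : Fin (n + 1) → α) (i + 1) = walkPos (x + v) t i := by
  simp [walkPos, sum_filter, Fin.sum_univ_succ, add_assoc]

lemma walkPos_succ {n : ℕ} (x : α) (s : Fin n → α) {i : ℕ} (hi : i < n) :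
    walkPos x s (i + 1) = walkPos x s i + s ⟨i, hi⟩ := by
  have hfilter : univ.filter (fun j : Fin n => (j : ℕ) < i + 1)
      = insert ⟨i, hi⟩ (univ.filter fun j : Fin n => (j : ℕ) < i) := by
    ext j
    simp only [mem_filter, mem_univ, true_and, mem_insert, Fin.ext_iff]
    omega
  rw [walkPos, hfilter, sum_insert (by simp), walkPos, add_comm (s _), add_assoc]

def walks (ok target : α → Prop) [DecidablePred ok] [DecidablePred target] {n : ℕ}
    (S : Fin n → Finset α) (x : α) : Finset (Fin n → α) :=
  {s ∈ Fintype.piFinset S | (∀ i ≤ n, ok (walkPos x s i)) ∧ target (walkPos x s n)}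

def walkCount (ok target : α → Prop) [DecidablePred ok] [DecidablePred target] {n : ℕ}
    (S : Fin n → Finset α) (x : α) : ℕ :=
  #(walks ok target S x)

variable {ok target : α → Prop} [DecidablePred ok] [DecidablePred target]

lemma walkCount_of_not_ok {n : ℕ} (S : Fin n → Finset α) {x : α} (hx : ¬ok x) :
    walkCount ok target S x = 0 := by
  refine card_eq_zero.2 (filter_eq_empty_iff.2 fun s _ hs => hx ?_)
  simpa using hs.1 0 (Nat.zero_le _)

lemma walkCount_zero (S : Fin 0 → Finset α) (x : α) :
    walkCount ok target S x = if ok x ∧ target x then 1 else 0 := by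
  simp only [walkCount, walks, nonpos_iff_eq_zero, forall_eq, walkPos_zero]
  split_ifs <;> simp_all

lemma walkCount_succ {n : ℕ} (S : Fin (n + 1) → Finset α) {x : α} (hx : ok x) :
    walkCount ok target S x = ∑ v ∈ S 0, walkCount ok target (Fin.tail S) (x + v) := by
  rw [walkCount, walks, card_filter_piFinset_succ]
  refine sum_congr rfl fun v _ => congrArg card (filter_congr fun t _ => ?_)
  rw [walkPos_cons_succ]
  refine and_congr_left' ⟨fun h i hi => ?_, fun h i hi => ?_⟩
  · simpa [walkPos_cons_succ] using h (i + 1) (by omega)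
  · cases i with
    | zero => simpa using hx
    | succ i => simpa [walkPos_cons_succ] using h i (by omega)

end Walks

def motzkinSteps : Finset ℤ := {-1, 0, 1}

def inStrip (H : ℕ) (t : ℤ) : Prop := 0 ≤ t ∧ t ≤ H

noncomputable def motzkinCount (H k : ℕ) (t : ℤ) : ℕ :=
  walkCount (inStrip H) (· = 0) (fun _ : Fin k => motzkinSteps) t

lemma motzkinCount_of_not_inStrip {H : ℕ} (k : ℕ) {t : ℤ} (ht : ¬inStrip H t) :
    motzkinCount H k t = 0 :=
  walkCount_of_not_ok _ ht

lemma motzkinCount_zero (H : ℕ) (t : ℤ) : motzkinCount H 0 t = if t = 0 then 1 else 0 := by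
  rw [motzkinCount, walkCount_zero]
  by_cases ht : t = 0 <;> simp [inStrip, ht]

lemma motzkinCount_succ {H : ℕ} (k : ℕ) {t : ℤ} (ht : inStrip H t) :
    motzkinCount H (k + 1) t = tridiag (motzkinCount H k) t := by
  rw [motzkinCount, walkCount_succ _ ht, motzkinSteps, sum_insert (by decide),
    sum_insert (by decide), sum_singleton, tridiag, ← sub_eq_add_neg, add_zero, add_assoc]
  rfl

/-- The number of lattice points `(i, h - i)` in the rectangle `[0, u] × [0, v]`. -/
def diagCount (h u v : ℤ) : ℤ := max 0 (min u h - max 0 (h - v) + 1)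

/-- Reflecting in `h = H + 1` (method of images) makes the weight vanish at the top of the strip. -/
def stripWeight (H h x y : ℤ) : ℤ := diagCount h x y - diagCount (2 * H + 2 - h) x y

lemma diagCount_omegaA_sum {h x y : ℤ} (hx : 0 ≤ x) (hy : 0 ≤ y) (h0 : 0 ≤ h) :
    diagCount h (x + 1) y + diagCount h (x - 1) (y + 1) + diagCount h x (y - 1)
      = tridiag (diagCount · x y) h := by
  simp only [tridiag, diagCount]; omega

lemma diagCount_omegaB_sum {h x y : ℤ} (hx : 0 ≤ x) (hy : 0 ≤ y) (h0 : 0 ≤ h) :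
    diagCount h (x + 1) (y - 1) + diagCount h (x - 1) y + diagCount h x (y + 1)
      = tridiag (diagCount · x y) h := by
  simp only [tridiag, diagCount]; omega

lemma stripWeight_eq_zero_of_not_nonneg {H h x y z : ℤ} (hs : x + y + z = 2 * H + 1)
    (hx : -1 ≤ x) (hy : -1 ≤ y) (hz : -1 ≤ z) (hxyz : ¬nonneg3 (x, y, z)) (h0 : 0 ≤ h)
    (hH : h ≤ H) : stripWeight H h x y = 0 := by
  simp only [nonneg3] at hxyz
  simp only [stripWeight, diagCount]; omega

lemma stripWeight_neg_one {H x y : ℤ} (hx : 0 ≤ x) (hy : 0 ≤ y) (hs : x + y ≤ 2 * H + 1) :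
    stripWeight H (-1) x y = 0 := by
  simp only [stripWeight, diagCount]; omega

lemma stripWeight_top (H x y : ℤ) : stripWeight H (H + 1) x y = 0 := by
  rw [stripWeight, show 2 * H + 2 - (H + 1) = H + 1 by ring, sub_self]

lemma stripWeight_zero {H x y : ℤ} (hx : 0 ≤ x) (hy : 0 ≤ y) (hs : x + y ≤ 2 * H + 1) :
    stripWeight H 0 x y = 1 := by
  simp only [stripWeight, diagCount]; omega

lemma stripWeight_corner {H h : ℤ} (h0 : 0 ≤ h) (hH : h ≤ H) :
    stripWeight H h (2 * H + 1) 0 = if h = 0 then 1 else 0 := by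
  simp only [stripWeight, diagCount]; split_ifs <;> omega

def stepSet (c : Bool) : Finset (ℤ × ℤ × ℤ) := if c then OmegaA else OmegaB

lemma sum_stepSet_stripWeight (c : Bool) {H h x y : ℤ} (hx : 0 ≤ x) (hy : 0 ≤ y) (h0 : 0 ≤ h)
    (hH : h ≤ 2 * H + 2) :
    ∑ v ∈ stepSet c, stripWeight H h (x + v.1) (y + v.2.1) = tridiag (stripWeight H · x y) h := by
  have hrefl : 0 ≤ 2 * H + 2 - h := by omega
  cases c
  · have hA := diagCount_omegaB_sum hx hy h0
    have hB := diagCount_omegaB_sum hx hy hrefl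
    simp only [stepSet, OmegaB, tridiag, stripWeight, Bool.false_eq_true, if_false] at hA hB ⊢
    rw [sum_insert (by decide), sum_insert (by decide), sum_singleton]
    ring_nf at hA hB ⊢
    linarith
  · have hA := diagCount_omegaA_sum hx hy h0
    have hB := diagCount_omegaA_sum hx hy hrefl
    simp only [stepSet, OmegaA, tridiag, stripWeight, if_true] at hA hB ⊢
    rw [sum_insert (by decide), sum_insert (by decide), sum_singleton]
    ring_nf at hA hB ⊢
    linarith

lemma stepSet_bounds (c : Bool) :
    ∀ v ∈ stepSet c, v.1 + v.2.1 + v.2.2 = 0 ∧ -1 ≤ v.1 ∧ -1 ≤ v.2.1 ∧ -1 ≤ v.2.2 := by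
  cases c <;> decide

lemma sum_stripWeight_mul_motzkinCount_succ (H n : ℕ) {x y : ℤ} (hx : 0 ≤ x) (hy : 0 ≤ y)
    (hs : x + y ≤ 2 * H + 1) :
    ∑ h ∈ Icc 0 (H : ℤ), stripWeight H h x y * motzkinCount H (n + 1) h
      = ∑ h ∈ Icc 0 (H : ℤ), tridiag (stripWeight H · x y) h * motzkinCount H n h := by
  have hM : ∀ t, ¬inStrip H t → ((motzkinCount H n t : ℕ) : ℤ) = 0 := fun t ht => by
    rw [motzkinCount_of_not_inStrip n ht, Nat.cast_zero]
  refine (sum_congr rfl fun h hh => ?_).trans (sum_Icc_tridiag_mul (stripWeight H · x y)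
    (fun t => (motzkinCount H n t : ℤ)) (a := 0) (b := H) (stripWeight_neg_one hx hy hs)
    (stripWeight_top _ _ _) (hM _ (by simp [inStrip])) (hM _ (by simp [inStrip]))).symm
  simp only [motzkinCount_succ n (mem_Icc.1 hh), tridiag, Nat.cast_add]

lemma sum_stripWeight_mul_eq_zero {H : ℕ} {x y z : ℤ} (hs : x + y + z = 2 * H + 1)
    (hx : -1 ≤ x) (hy : -1 ≤ y) (hz : -1 ≤ z) (hp : ¬nonneg3 (x, y, z)) (f : ℤ → ℤ) :
    ∑ h ∈ Icc 0 (H : ℤ), stripWeight H h x y * f h = 0 := by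
  refine sum_eq_zero fun h hh => ?_
  rw [mem_Icc] at hh
  rw [stripWeight_eq_zero_of_not_nonneg hs hx hy hz hp hh.1 hh.2, zero_mul]

theorem walkCount_stepSet_eq_sum (H : ℕ) {n : ℕ} (w : Fin n → Bool) {x y z : ℤ}
    (hs : x + y + z = 2 * H + 1) (hx : -1 ≤ x) (hy : -1 ≤ y) (hz : -1 ≤ z) :
    (walkCount nonneg3 (fun _ => True) (fun j => stepSet (w j)) (x, y, z) : ℤ)
      = ∑ h ∈ Icc 0 (H : ℤ), stripWeight H h x y * motzkinCount H n h := by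
  induction n generalizing x y z with
  | zero =>
    by_cases hp : nonneg3 (x, y, z)
    swap
    · rw [walkCount_of_not_ok _ hp, Nat.cast_zero, sum_stripWeight_mul_eq_zero hs hx hy hz hp]
    obtain ⟨hx₀, hy₀, hz₀⟩ : 0 ≤ x ∧ 0 ≤ y ∧ 0 ≤ z := hp
    rw [walkCount_zero, if_pos ⟨⟨hx₀, hy₀, hz₀⟩, trivial⟩,
      sum_eq_single_of_mem 0 (by simp) fun h _ h0 => by simp [motzkinCount_zero, h0],
      motzkinCount_zero, if_pos rfl, stripWeight_zero hx₀ hy₀ (by omega)]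
    simp
  | succ n ih =>
    by_cases hp : nonneg3 (x, y, z)
    swap
    · rw [walkCount_of_not_ok _ hp, Nat.cast_zero, sum_stripWeight_mul_eq_zero hs hx hy hz hp]
    obtain ⟨hx₀, hy₀, hz₀⟩ : 0 ≤ x ∧ 0 ≤ y ∧ 0 ≤ z := hp
    have hstep : ∀ v ∈ stepSet (w 0),
        (walkCount nonneg3 (fun _ => True) (Fin.tail fun j => stepSet (w j)) ((x, y, z) + v) : ℤ)
          = ∑ h ∈ Icc 0 (H : ℤ), stripWeight H h (x + v.1) (y + v.2.1) * motzkinCount H n h := by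
      intro v hv
      obtain ⟨hv, h₁, h₂, h₃⟩ := stepSet_bounds _ v hv
      rw [show (x, y, z) + v = (x + v.1, y + v.2.1, z + v.2.2) from rfl]
      exact ih (Fin.tail w) (by omega) (by omega) (by omega) (by omega)
    rw [sum_stripWeight_mul_motzkinCount_succ H n hx₀ hy₀ (by omega),
      walkCount_succ _ ⟨hx₀, hy₀, hz₀⟩, Nat.cast_sum, sum_congr rfl hstep, sum_comm]
    refine sum_congr rfl fun h hh => ?_
    rw [mem_Icc] at hh
    rw [← sum_mul, sum_stepSet_stripWeight _ hx₀ hy₀ hh.1 (by omega)]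

lemma walkCount_stepSet_corner (H : ℕ) {n : ℕ} (w : Fin n → Bool) :
    walkCount nonneg3 (fun _ => True) (fun j => stepSet (w j)) (((2 * H + 1 : ℕ) : ℤ), 0, 0)
      = motzkinCount H n 0 := by
  have key := walkCount_stepSet_eq_sum H w (x := 2 * H + 1) (y := 0) (z := 0) (by ring)
    (by omega) (by norm_num) (by norm_num)
  rw [sum_eq_single_of_mem 0 (by simp) fun h hh h0 => by
      rw [stripWeight_corner (mem_Icc.1 hh).1 (mem_Icc.1 hh).2, if_neg h0, zero_mul],
    stripWeight_corner le_rfl (by positivity), if_pos rfl, one_mul] at key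
  push_cast
  exact_mod_cast key

def colourWords (n a b : ℕ) : Finset (Fin n → Bool) :=
  {c | #{i | c i = true} = a ∧ #{i | c i = false} = b}

def colourOf {n : ℕ} (s : Fin n → ℤ × ℤ × ℤ) : Fin n → Bool := fun j => decide (s j ∈ OmegaA)

lemma mem_stepSet_iff {c : Bool} {v : ℤ × ℤ × ℤ} :
    v ∈ stepSet c ↔ v ∈ OmegaFull ∧ decide (v ∈ OmegaA) = c := by
  have hdisj : v ∈ OmegaB → v ∉ OmegaA := by revert v; decide
  cases c <;>
    simp only [stepSet, OmegaFull, mem_union, decide_eq_false_iff_not, decide_eq_true_iff,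
      Bool.false_eq_true, if_false, if_true] <;> tauto

lemma mem_piFinset_stepSet_iff {n : ℕ} {s : Fin n → ℤ × ℤ × ℤ} {w : Fin n → Bool} :
    s ∈ Fintype.piFinset (fun j => stepSet (w j))
      ↔ s ∈ Fintype.piFinset (fun _ => OmegaFull) ∧ colourOf s = w := by
  simp only [Fintype.mem_piFinset, mem_stepSet_iff, funext_iff, colourOf, forall_and]

lemma countA_eq_card_colourOf {n : ℕ} (s : Fin n → ℤ × ℤ × ℤ) :
    countA s = #{j | colourOf s j = true} := by
  simp [countA, colourOf]

lemma countB_eq_card_colourOf {n : ℕ} {s : Fin n → ℤ × ℤ × ℤ} (hs : ∀ j, s j ∈ OmegaFull) :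
    countB s = #{j | colourOf s j = false} := by
  refine congrArg card (filter_congr fun j _ => ?_)
  simpa [stepSet, colourOf, hs j] using mem_stepSet_iff (c := false) (v := s j)

lemma card_filter_triWalks_eq_sum (x₀ : ℤ × ℤ × ℤ) (n a b : ℕ) :
    #{s ∈ triWalks x₀ n | countA s = a ∧ countB s = b}
      = ∑ w ∈ colourWords n a b, walkCount nonneg3 (fun _ => True) (fun j => stepSet (w j)) x₀ := by
  rw [card_eq_sum_card_fiberwise (f := colourOf) fun s hs => ?_]
  · refine sum_congr rfl fun w hw => congrArg card (ext fun s => ?_)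
    simp only [colourWords, mem_filter, mem_univ, true_and] at hw
    simp only [triWalks, walks, mem_filter, mem_piFinset_stepSet_iff, and_true]
    simp only [triPos_eq_walkPos]
    constructor
    · rintro ⟨⟨⟨hfull, hpos⟩, -⟩, rfl⟩
      exact ⟨⟨hfull, rfl⟩, hpos⟩
    · rintro ⟨⟨hfull, rfl⟩, hpos⟩
      refine ⟨⟨⟨hfull, hpos⟩, ?_⟩, rfl⟩
      rw [countA_eq_card_colourOf, countB_eq_card_colourOf (Fintype.mem_piFinset.1 hfull)]
      exact hw
  · simp only [triWalks, coe_filter, Set.mem_ofPred_eq, mem_filter] at hs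
    simp only [colourWords, coe_filter, mem_univ, true_and, Set.mem_ofPred_eq]
    rw [← countA_eq_card_colourOf, ← countB_eq_card_colourOf (Fintype.mem_piFinset.1 hs.1.1)]
    exact hs.2

lemma walkPos_increments {n : ℕ} (h : Fin (n + 1) → ℤ) (k : Fin (n + 1)) :
    walkPos (h 0) (fun i : Fin n => h i.succ - h i.castSucc) k = h k := by
  induction k using Fin.induction with
  | zero => exact walkPos_zero _ _
  | succ i ih =>
    rw [Fin.val_succ, walkPos_succ _ _ i.isLt, Fin.eta, ← Fin.val_castSucc, ih, add_sub_cancel]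

lemma increments_walkPos {n : ℕ} (x : ℤ) (d : Fin n → ℤ) :
    (fun i : Fin n => walkPos x d (i.succ : ℕ) - walkPos x d (i.castSucc : ℕ)) = d := by
  funext i
  rw [Fin.val_succ, walkPos_succ _ _ i.isLt, Fin.val_castSucc, add_sub_cancel_left]

lemma isMotzkin_walkPos_iff {H n : ℕ} (d : Fin n → ℤ) :
    IsMotzkin H n (fun i => walkPos 0 d i) ↔
      d ∈ walks (inStrip H) (· = 0) (fun _ => motzkinSteps) 0 := by
  have hsteps := congrFun (increments_walkPos 0 d)
  rw [walks, mem_filter]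
  simp only [IsMotzkin, hsteps, Fin.val_zero, walkPos_zero, Fin.val_last, true_and,
    Fintype.mem_piFinset, motzkinSteps, mem_insert, mem_singleton, Set.mem_insert_iff,
    Set.mem_singleton_iff, inStrip, Fin.forall_iff, Nat.lt_succ_iff]
  tauto

def motzkinEquiv (H n : ℕ) : {h : Fin (n + 1) → ℤ // IsMotzkin H n h} ≃
    walks (inStrip H) (· = 0) (fun _ : Fin n => motzkinSteps) 0 where
  toFun h := ⟨fun i => h.1 i.succ - h.1 i.castSucc, by
    rw [← isMotzkin_walkPos_iff]
    convert h.2 using 1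
    funext k
    rw [← h.2.1, walkPos_increments]⟩
  invFun d := ⟨fun i => walkPos 0 d.1 i, (isMotzkin_walkPos_iff d.1).2 d.2⟩
  left_inv h := Subtype.ext <| funext fun k => by
    simp only
    rw [← h.2.1, walkPos_increments]
  right_inv d := Subtype.ext (increments_walkPos 0 d.1)

lemma natCard_isMotzkin (H n : ℕ) :
    Nat.card {h : Fin (n + 1) → ℤ // IsMotzkin H n h} = motzkinCount H n 0 := by
  rw [Nat.card_congr (motzkinEquiv H n), Nat.card_eq_fintype_card, Fintype.card_coe]
  rfl

lemma natCard_twoColouredMotzkin (H n a b : ℕ) :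
    Nat.card {hc : (Fin (n + 1) → ℤ) × (Fin n → Bool) //
        IsMotzkin H n hc.1 ∧ #{i | hc.2 i = true} = a ∧ #{i | hc.2 i = false} = b}
      = #(colourWords n a b) * motzkinCount H n 0 := by
  rw [Nat.card_congr (Equiv.subtypeProdEquivProd (p := IsMotzkin H n)
      (q := fun c : Fin n → Bool => #{i | c i = true} = a ∧ #{i | c i = false} = b)),
    Nat.card_prod, natCard_isMotzkin, mul_comm, Nat.card_eq_fintype_card, Fintype.card_subtype]
  rfl

/-- Walks from the corner of a triangle of odd side-length `L = 2H+1` with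
`a` steps in Ω′ and `b` steps in Ω″ are equinumerous with two-coloured Motzkin paths in a
strip of height `H` with `a` steps of colour A and `b` steps of colour B. -/
theorem corner_walks_eq_twocoloured_motzkin_odd (H a b : ℕ) :
    ((triWalks (((2 * H + 1 : ℕ) : ℤ), 0, 0) (a + b)).filter
        (fun s => countA s = a ∧ countB s = b)).card
      = Nat.card {hc : (Fin (a + b + 1) → ℤ) × (Fin (a + b) → Bool) //
          IsMotzkin H (a + b) hc.1 ∧
          (Finset.univ.filter fun i => hc.2 i = true).card = a ∧
          (Finset.univ.filter fun i => hc.2 i = false).card = b} := by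
  rw [card_filter_triWalks_eq_sum, natCard_twoColouredMotzkin]
  simp only [walkCount_stepSet_corner, sum_const, smul_eq_mul]
end

section
/- Fix H, n ∈ ℕ. The number of n-step walks in the triangle model starting at (2H,0,0) all of whose steps lie in the sublattice Ω′ equals the number of Motzkin paths of length n in a strip of height H having no level step at height H (i.e. no index i with h_i = h_{i+1} = H). -/
open scoped Classical

/-!
Both sides count paths by iterating a transfer operator, and the kernel
`K(a, (u, v, w)) = 1 + a + ψₐ(u) + ψₐ(v) + ψₐ(w)`, `ψₐ(x) = min(0, x - a) + max(0, x + a - 2H - 1)`,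
intertwines the Ω′-walk operator on the triangle `u + v + w = 2H` with the Motzkin operator on the
strip `[0, H]`. The three steps of Ω′ shift each coordinate once by `-1`, `0` and `+1`, and `ψₐ(x)`
depends only on `x - a` and `x + a`; so a walk step acts on `K` exactly as the free Motzkin step
`φ ↦ φ(a - 1) + φ(a) + φ(a + 1)` acts in `a`. The reflection `ψₐ(2H + 1 - x) = -ψₐ(x)` makes `K`
vanish just outside the triangle, while `K(-1, ·) = 0` and `K(H, ·) + K(H + 1, ·) = 0` account for
the floor of the strip and the forbidden level step at its top. Since `K(0, ·) = 1` on the triangle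
and `K(a, (2H, 0, 0)) = [a = 0]`, evaluating at the corner turns walks into Motzkin paths.
-/

open Fin Finset

section Transfer

variable {M : Type*} [AddCommGroup M]

noncomputable def transfer (S : Finset M) (P : M → M → Prop) (f : M → ℤ) (p : M) : ℤ :=
  ∑ d ∈ S with P p (p + d), f (p + d)

noncomputable def walksWith (S : Finset M) (P : M → M → Prop) (Q : M → Prop) (p : M) (n : ℕ) :
    Finset (Fin n → M) :=
  (Fintype.piFinset fun _ => S).filter fun s =>
    (∀ j : Fin n, P (p + partialSum s j.castSucc) (p + partialSum s j.succ)) ∧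
      Q (p + partialSum s (last n))

variable {S : Finset M} {P : M → M → Prop} {Q : M → Prop} {p : M} {n : ℕ}

theorem cons_mem_walksWith {d : M} {t : Fin n → M} :
    (Fin.cons d t : Fin (n + 1) → M) ∈ walksWith S P Q p (n + 1) ↔
      d ∈ S ∧ P p (p + d) ∧ t ∈ walksWith S P Q (p + d) n := by
  simp only [walksWith, mem_filter, Fintype.mem_piFinset, forall_fin_succ, cons_zero, cons_succ,
    castSucc_zero, castSucc_succ, ← succ_last, partialSum_zero, partialSum_succ', tail_cons,
    add_zero, add_assoc]
  tauto

theorem card_walksWith_succ :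
    (walksWith S P Q p (n + 1)).card =
      ∑ d ∈ S with P p (p + d), (walksWith S P Q (p + d) n).card := by
  rw [card_eq_sum_card_fiberwise (f := fun s => s 0) (t := S.filter fun d => P p (p + d))]
  · refine sum_congr rfl fun d hd => card_nbij' Fin.tail (fun t => Fin.cons d t) ?_ ?_ ?_ ?_
    · intro s hs
      obtain ⟨hmem, rfl⟩ := mem_filter.1 hs
      rw [← Fin.cons_self_tail s, cons_mem_walksWith] at hmem
      exact hmem.2.2
    · intro t ht
      simp only [mem_coe, mem_filter, cons_mem_walksWith, cons_zero, and_true]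
      exact ⟨(mem_filter.1 hd).1, (mem_filter.1 hd).2, ht⟩
    · intro s hs
      obtain ⟨-, rfl⟩ := mem_filter.1 hs
      exact Fin.cons_self_tail s
    · intro t _
      exact Fin.tail_cons _ _
  · intro s hs
    rw [mem_coe, ← Fin.cons_self_tail s, cons_mem_walksWith] at hs
    exact mem_filter.2 ⟨hs.1, hs.2.1⟩

theorem card_walksWith [DecidablePred Q] :
    ((walksWith S P Q p n).card : ℤ) = (transfer S P)^[n] (fun q => if Q q then 1 else 0) p := by
  induction n generalizing p with
  | zero => simp [walksWith, apply_ite]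
  | succ n ih =>
    rw [card_walksWith_succ, Function.iterate_succ_apply', transfer]
    push_cast
    exact sum_congr rfl fun d _ => ih

end Transfer

section PartialSums

variable {M : Type*} [AddCommGroup M] {n : ℕ}

theorem sum_filter_val_lt_eq_partialSum (s : Fin n → M) (i : Fin (n + 1)) :
    ∑ j ∈ univ.filter (fun j : Fin n => (j : ℕ) < i), s j = partialSum s i := by
  induction i using Fin.induction with
  | zero => simp
  | succ i ih =>
    have hinsert : univ.filter (fun j : Fin n => (j : ℕ) < i.succ) =
        insert i (univ.filter fun j : Fin n => (j : ℕ) < i.castSucc) := by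
      ext j
      simp only [mem_filter, mem_univ, true_and, mem_insert, Fin.ext_iff, val_succ, val_castSucc]
      omega
    rw [hinsert, sum_insert (by simp), ih, partialSum_succ, add_comm]

theorem partialSum_sub_eq_self {h : Fin (n + 1) → M} (h₀ : h 0 = 0) :
    partialSum (fun i => h i.succ - h i.castSucc) = h := by
  simpa [h₀, sub_eq_neg_add] using partialSum_left_neg h

theorem partialSum_succ_sub_castSucc (s : Fin n → M) (i : Fin n) :
    partialSum s i.succ - partialSum s i.castSucc = s i := by
  rw [partialSum_succ, add_sub_cancel_left]

end PartialSums

section Motzkin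

variable (H : ℕ)

-- Checked at the target height, so that `motzkinStep H g` only reads `g` on `[0, H]`.
def motzkinRel (a b : ℤ) : Prop := 0 ≤ b ∧ b ≤ H ∧ ¬(a = H ∧ b = H)

noncomputable abbrev motzkinStep : (ℤ → ℤ) → ℤ → ℤ := transfer {-1, 0, 1} (motzkinRel H)

def MotzkinAdj (a b : ℤ) : Prop := |a - b| ≤ 1 ∧ ¬(a = H ∧ b = H)

theorem motzkinAdj_comm {a b : ℤ} : MotzkinAdj H a b ↔ MotzkinAdj H b a := by
  unfold MotzkinAdj; rw [abs_sub_comm]; tauto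

theorem motzkinStep_eq_sum_Icc (g : ℤ → ℤ) (a : ℤ) :
    motzkinStep H g a = ∑ b ∈ Icc 0 (H : ℤ), if MotzkinAdj H a b then g b else 0 := by
  rw [motzkinStep, transfer, ← sum_filter]
  refine sum_nbij' (a + ·) (· - a) ?_ ?_ ?_ ?_ fun _ _ => rfl <;> intro x hx <;>
    simp_all [motzkinRel, MotzkinAdj, abs_le] <;> omega

theorem motzkinStep_apply_of_boundary {φ : ℤ → ℤ} (h₀ : φ (-1) = 0) (hH : φ H + φ (H + 1) = 0)
    {a : ℤ} (ha₀ : 0 ≤ a) (haH : a ≤ H) :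
    motzkinStep H φ a = φ (a - 1) + φ a + φ (a + 1) := by
  rw [motzkinStep, transfer, sum_filter, sum_insert (by decide), sum_insert (by decide),
    sum_singleton]
  have hdown : (if motzkinRel H a (a + -1) then φ (a + -1) else 0) = φ (a - 1) := by
    by_cases ha : a = 0
    · rw [if_neg (by unfold motzkinRel; omega), ha, zero_sub, h₀]
    · rw [if_pos (by unfold motzkinRel; omega), ← sub_eq_add_neg]
  have hrest : ((if motzkinRel H a (a + 0) then φ (a + 0) else 0) +
      if motzkinRel H a (a + 1) then φ (a + 1) else 0) = φ a + φ (a + 1) := by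
    by_cases ha : a = H
    · rw [if_neg (by unfold motzkinRel; omega), if_neg (by unfold motzkinRel; omega), ha, hH,
        add_zero]
    · rw [if_pos (by unfold motzkinRel; omega), if_pos (by unfold motzkinRel; omega), add_zero]
  rw [hdown, hrest, add_assoc]

theorem sum_mul_motzkinStep {φ : ℤ → ℤ} (h₀ : φ (-1) = 0) (hH : φ H + φ (H + 1) = 0)
    (g : ℤ → ℤ) :
    ∑ b ∈ Icc 0 (H : ℤ), φ b * motzkinStep H g b =
      ∑ a ∈ Icc 0 (H : ℤ), (φ (a - 1) + φ a + φ (a + 1)) * g a := by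
  calc ∑ b ∈ Icc 0 (H : ℤ), φ b * motzkinStep H g b
      = ∑ b ∈ Icc 0 (H : ℤ), ∑ a ∈ Icc 0 (H : ℤ), if MotzkinAdj H a b then g a * φ b else 0 := by
        simp only [motzkinStep_eq_sum_Icc, mul_sum, motzkinAdj_comm H (a := _), mul_ite, mul_zero,
          mul_comm]
    _ = ∑ a ∈ Icc 0 (H : ℤ), g a * motzkinStep H φ a := by
        rw [sum_comm]
        simp only [motzkinStep_eq_sum_Icc, mul_sum, mul_ite, mul_zero]
    _ = _ := sum_congr rfl fun a ha => by
        rw [mem_Icc] at ha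
        rw [motzkinStep_apply_of_boundary H h₀ hH ha.1 ha.2, mul_comm]

end Motzkin

def coordSum : ℤ × ℤ × ℤ →+ ℤ where
  toFun p := p.1 + p.2.1 + p.2.2
  map_zero' := rfl
  map_add' p q := by simp only [Prod.fst_add, Prod.snd_add]; ring

theorem coordSum_apply (p : ℤ × ℤ × ℤ) : coordSum p = p.1 + p.2.1 + p.2.2 := rfl

theorem coordSum_eq_zero_of_mem_OmegaA {d : ℤ × ℤ × ℤ} (hd : d ∈ OmegaA) : coordSum d = 0 := by
  simp only [OmegaA, mem_insert, mem_singleton] at hd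
  rcases hd with rfl | rfl | rfl <;> rfl

def InTriangle (H : ℕ) (p : ℤ × ℤ × ℤ) : Prop := nonneg3 p ∧ coordSum p = 2 * H

section Kernel

variable (H : ℕ)

def profile (a x : ℤ) : ℤ := min 0 (x - a) + max 0 (x + a - 2 * H - 1)

def kernel (a : ℤ) (p : ℤ × ℤ × ℤ) : ℤ :=
  1 + a + profile H a p.1 + profile H a p.2.1 + profile H a p.2.2

theorem profile_reflect (a x : ℤ) : profile H a (2 * H + 1 - x) = -profile H a x := by
  unfold profile; omega

theorem profile_shift_symm (a x : ℤ) :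
    profile H a (x + 1) + profile H a x + profile H a (x - 1) =
      profile H (a - 1) x + profile H a x + profile H (a + 1) x := by
  unfold profile; ring_nf

theorem sum_kernel_add_step (a : ℤ) (p : ℤ × ℤ × ℤ) :
    ∑ d ∈ OmegaA, kernel H a (p + d) = kernel H (a - 1) p + kernel H a p + kernel H (a + 1) p := by
  obtain ⟨u, v, w⟩ := p
  rw [OmegaA, sum_insert (by decide), sum_insert (by decide), sum_singleton]
  simp only [kernel, Prod.mk_add_mk]
  linear_combination (norm := ring_nf)
    profile_shift_symm H a u + profile_shift_symm H a v + profile_shift_symm H a w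

theorem kernel_eq_zero_of_coord_eq_neg_one {a : ℤ} (ha₀ : 0 ≤ a) (haH : a ≤ H)
    {p : ℤ × ℤ × ℤ} (hp : coordSum p = 2 * H) (h : p.1 = -1 ∨ p.2.1 = -1 ∨ p.2.2 = -1) :
    kernel H a p = 0 := by
  obtain ⟨u, v, w⟩ := p
  have h₁ : profile H a (-1) = -1 - a := by unfold profile; omega
  have hr := profile_reflect H a
  rw [coordSum_apply] at hp
  dsimp only at hp h
  rcases h with rfl | rfl | rfl <;> dsimp only [kernel]
  · rw [show w = 2 * H + 1 - v by omega, hr, h₁]; ring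
  · rw [show w = 2 * H + 1 - u by omega, hr, h₁]; ring
  · rw [show v = 2 * H + 1 - u by omega, hr, h₁]; ring

variable {H}

theorem kernel_neg_one {p : ℤ × ℤ × ℤ} (hp : InTriangle H p) : kernel H (-1) p = 0 := by
  obtain ⟨⟨hu, hv, hw⟩, hs⟩ := hp
  rw [coordSum_apply] at hs
  unfold kernel profile
  omega

theorem kernel_zero {p : ℤ × ℤ × ℤ} (hp : InTriangle H p) : kernel H 0 p = 1 := by
  obtain ⟨⟨hu, hv, hw⟩, hs⟩ := hp
  rw [coordSum_apply] at hs
  unfold kernel profile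
  omega

theorem kernel_add_kernel_succ {p : ℤ × ℤ × ℤ} (hp : coordSum p = 2 * H) :
    kernel H H p + kernel H (H + 1) p = 0 := by
  have hpair (x : ℤ) : profile H H x + profile H (H + 1) x = 2 * x - 2 * H - 1 := by
    unfold profile; omega
  rw [coordSum_apply] at hp
  unfold kernel
  linear_combination hpair p.1 + hpair p.2.1 + hpair p.2.2 + 2 * hp

theorem kernel_corner {a : ℤ} (ha₀ : 0 ≤ a) (haH : a ≤ H) :
    kernel H a ((2 * H : ℕ), 0, 0) = if a = 0 then 1 else 0 := by
  simp only [kernel, profile]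
  push_cast
  split_ifs <;> omega

end Kernel

theorem coord_eq_neg_one_of_not_nonneg3_add {p d : ℤ × ℤ × ℤ} (hp : nonneg3 p) (hd : d ∈ OmegaA)
    (h : ¬nonneg3 (p + d)) : (p + d).1 = -1 ∨ (p + d).2.1 = -1 ∨ (p + d).2.2 = -1 := by
  obtain ⟨u, v, w⟩ := p
  obtain ⟨hu, hv, hw⟩ : 0 ≤ u ∧ 0 ≤ v ∧ 0 ≤ w := hp
  simp only [OmegaA, mem_insert, mem_singleton] at hd
  unfold nonneg3 at h
  rcases hd with rfl | rfl | rfl <;> simp only [Prod.mk_add_mk] at h ⊢ <;> omega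

noncomputable abbrev walkStep : ((ℤ × ℤ × ℤ) → ℤ) → (ℤ × ℤ × ℤ) → ℤ :=
  transfer OmegaA fun p _ => nonneg3 p

noncomputable def kernelTransform (H : ℕ) (g : ℤ → ℤ) (p : ℤ × ℤ × ℤ) : ℤ :=
  if InTriangle H p then ∑ a ∈ Icc 0 (H : ℤ), kernel H a p * g a else 0

section KernelTransform

variable {H : ℕ}

theorem kernelTransform_add_step {p : ℤ × ℤ × ℤ} (hp : InTriangle H p) {d : ℤ × ℤ × ℤ}
    (hd : d ∈ OmegaA) (g : ℤ → ℤ) :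
    kernelTransform H g (p + d) = ∑ a ∈ Icc 0 (H : ℤ), kernel H a (p + d) * g a := by
  have hsum : coordSum (p + d) = 2 * H := by
    rw [map_add, coordSum_eq_zero_of_mem_OmegaA hd, add_zero, hp.2]
  rw [kernelTransform, ite_eq_left_iff]
  intro hout
  refine (sum_eq_zero fun a ha => ?_).symm
  rw [mem_Icc] at ha
  have hout' : ¬nonneg3 (p + d) := fun h => hout ⟨h, hsum⟩
  rw [kernel_eq_zero_of_coord_eq_neg_one H ha.1 ha.2 hsum
    (coord_eq_neg_one_of_not_nonneg3_add hp.1 hd hout'), zero_mul]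

theorem semiconj_kernelTransform :
    Function.Semiconj (kernelTransform H) (motzkinStep H) walkStep := by
  intro g
  funext p
  by_cases hp : InTriangle H p
  · have h₀ : kernel H (-1) p = 0 := kernel_neg_one hp
    have hH : kernel H H p + kernel H (H + 1) p = 0 := kernel_add_kernel_succ hp.2
    rw [kernelTransform, if_pos hp, sum_mul_motzkinStep H h₀ hH, walkStep, transfer,
      filter_true_of_mem fun _ _ => hp.1,
      sum_congr rfl fun d hd => kernelTransform_add_step hp hd g, sum_comm]
    simp only [← sum_mul, sum_kernel_add_step]
  · rw [kernelTransform, if_neg hp, walkStep, transfer]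
    refine (sum_eq_zero fun d hd => ?_).symm
    obtain ⟨hd, hnn⟩ := mem_filter.1 hd
    rw [kernelTransform, if_neg]
    rintro ⟨-, hsum⟩
    rw [map_add, coordSum_eq_zero_of_mem_OmegaA hd, add_zero] at hsum
    exact hp ⟨hnn, hsum⟩

theorem kernelTransform_indicator_zero :
    kernelTransform H (fun a => if a = 0 then 1 else 0) =
      fun p => if InTriangle H p then 1 else 0 := by
  funext p
  rw [kernelTransform]
  split_ifs with hp
  · simp [kernel_zero hp]
  · rfl

theorem kernelTransform_corner (g : ℤ → ℤ) :
    kernelTransform H g ((2 * H : ℕ), 0, 0) = g 0 := by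
  have hcorner : InTriangle H ((2 * H : ℕ), 0, 0) := by
    simp [InTriangle, nonneg3, coordSum_apply]
  rw [kernelTransform, if_pos hcorner, sum_congr rfl fun a ha => by
    rw [kernel_corner (mem_Icc.1 ha).1 (mem_Icc.1 ha).2]]
  simp

end KernelTransform

theorem coordSum_partialSum {n : ℕ} {s : Fin n → ℤ × ℤ × ℤ} (hs : ∀ j, s j ∈ OmegaA)
    (i : Fin (n + 1)) : coordSum (partialSum s i) = 0 := by
  induction i using Fin.induction with
  | zero => simp
  | succ i ih => rw [partialSum_succ, map_add, ih, coordSum_eq_zero_of_mem_OmegaA (hs i), add_zero]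

theorem triPos_eq_add_partialSum {n : ℕ} (p : ℤ × ℤ × ℤ) (s : Fin n → ℤ × ℤ × ℤ)
    (i : Fin (n + 1)) : triPos p s i = p + partialSum s i := by
  rw [triPos, sum_filter_val_lt_eq_partialSum]

theorem filter_triWalks_eq_walksWith {H n : ℕ} {p : ℤ × ℤ × ℤ} (hp : coordSum p = 2 * H) :
    (triWalks p n).filter (fun s => ∀ j, s j ∈ OmegaA) =
      walksWith OmegaA (fun q _ => nonneg3 q) (InTriangle H) p n := by
  ext s
  have hpos : (∀ i ≤ n, nonneg3 (triPos p s i)) ↔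
      ∀ i : Fin (n + 1), nonneg3 (p + partialSum s i) := by
    refine ⟨fun h i => ?_, fun h i hi => ?_⟩
    · rw [← triPos_eq_add_partialSum]
      exact h i (Nat.lt_succ_iff.1 i.2)
    · have hi' := h ⟨i, Nat.lt_succ_of_le hi⟩
      rwa [← triPos_eq_add_partialSum] at hi'
  rw [mem_filter, triWalks, walksWith, mem_filter, mem_filter, Fintype.mem_piFinset,
    Fintype.mem_piFinset, hpos, forall_fin_succ', InTriangle]
  constructor
  · rintro ⟨⟨-, hcs, hlast⟩, hA⟩
    exact ⟨hA, hcs, hlast, by rw [map_add, coordSum_partialSum hA, add_zero, hp]⟩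
  · rintro ⟨hA, hcs, hlast, -⟩
    exact ⟨⟨fun j => mem_union_left _ (hA j), hcs, hlast⟩, hA⟩

theorem mem_walksWith_motzkinRel_iff {H n : ℕ} {s : Fin n → ℤ} :
    s ∈ walksWith {-1, 0, 1} (motzkinRel H) (· = 0) 0 n ↔
      IsMotzkin H n (partialSum s) ∧ NoLevelAtTop H n (partialSum s) := by
  simp only [walksWith, mem_filter, Fintype.mem_piFinset, zero_add, IsMotzkin, NoLevelAtTop,
    motzkinRel, forall_fin_succ, partialSum_zero, partialSum_succ_sub_castSucc, le_refl,
    Nat.cast_nonneg, true_and, forall_and, mem_insert, mem_singleton, Set.mem_insert_iff,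
    Set.mem_singleton_iff]
  tauto

theorem natCard_motzkin_eq_card_walksWith (H n : ℕ) :
    Nat.card {h : Fin (n + 1) → ℤ // IsMotzkin H n h ∧ NoLevelAtTop H n h} =
      (walksWith {-1, 0, 1} (motzkinRel H) (· = 0) 0 n).card := by
  rw [← Nat.card_eq_finsetCard]
  refine Nat.card_congr
    { toFun := fun h => ⟨fun i => h.1 i.succ - h.1 i.castSucc, ?_⟩
      invFun := fun s => ⟨partialSum s.1, mem_walksWith_motzkinRel_iff.1 s.2⟩
      left_inv := fun h => Subtype.ext (partialSum_sub_eq_self h.2.1.1)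
      right_inv := fun s => Subtype.ext (funext (partialSum_succ_sub_castSucc s.1)) }
  rw [mem_walksWith_motzkinRel_iff, partialSum_sub_eq_self h.2.1.1]
  exact h.2

/-- Walks from the corner of a triangle of even side-length `2H` taking
steps only in Ω′ are equinumerous with Motzkin paths in a strip of height `H` having no
level step at height `H`. -/
theorem corner_directed_walks_eq_motzkin_even (H n : ℕ) :
    ((triWalks (((2 * H : ℕ) : ℤ), 0, 0) n).filter
        (fun s => ∀ j, s j ∈ OmegaA)).card
      = Nat.card {h : Fin (n + 1) → ℤ // IsMotzkin H n h ∧ NoLevelAtTop H n h} := by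
  have hcorner : coordSum (((2 * H : ℕ) : ℤ), 0, 0) = 2 * H := by simp [coordSum_apply]
  rw [filter_triWalks_eq_walksWith hcorner, natCard_motzkin_eq_card_walksWith,
    ← Nat.cast_inj (R := ℤ), card_walksWith, card_walksWith, ← kernelTransform_indicator_zero,
    ← semiconj_kernelTransform.iterate_right n, kernelTransform_corner]
end

section
/- Fix L, n ∈ ℕ. The number of n-step walks in the triangle model starting at (L,0,0) all of whose steps lie in the sublattice Ω′ equals the number of n-step three-candidate Ballot paths with excess L. -/
open scoped Classical

/-- Number of steps among the first `i` whose value is `c` (coding U = 1, D = -1, H = 0). -/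
noncomputable def prefixCount {n : ℕ} (e : Fin n → ℤ) (c : ℤ) (i : ℕ) : ℕ :=
  (Finset.univ.filter fun j : Fin n => (j : ℕ) < i ∧ e j = c).card

/-- An `n`-step three-candidate Ballot path with excess `L`, coded by the vertical
displacements of its steps (U = 1, D = -1, H = 0): in every prefix
#U ≥ #D ≥ #H and #U − #H ≤ L. -/
def IsBallot (L n : ℕ) (e : Fin n → ℤ) : Prop :=
  (∀ j, e j = 1 ∨ e j = -1 ∨ e j = 0) ∧
    ∀ i ≤ n, prefixCount e (-1) i ≤ prefixCount e 1 i ∧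
      prefixCount e 0 i ≤ prefixCount e (-1) i ∧
      prefixCount e 1 i ≤ L + prefixCount e 0 i

/-!
Along a walk with steps in Ω′ the middle coordinate of each step is `1`, `-1` or `0`, and it
determines the step, so Ω′-walks are the same as words in `U = (-1,1,0)`, `D = (0,-1,1)`,
`H = (1,0,-1)`. After a prefix with `u`, `d`, `h` letters of each kind the walk started at
`(L,0,0)` stands at `(L + h - u, u - d, d - h)`, and this point lies in ℕ³ exactly when
`d ≤ u`, `h ≤ d` and `u ≤ L + h`: the Ballot conditions with excess `L`.
-/

open Finset

/-- The Ω′ step with middle coordinate `h` (junk value `(1,0,-1)` off `{1, -1, 0}`). -/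
def directedStep (h : ℤ) : ℤ × ℤ × ℤ :=
  if h = 1 then (-1, 1, 0) else if h = -1 then (0, -1, 1) else (1, 0, -1)

lemma mem_OmegaA_iff (v : ℤ × ℤ × ℤ) :
    v ∈ OmegaA ↔ v = (1, 0, -1) ∨ v = (-1, 1, 0) ∨ v = (0, -1, 1) := by
  simp [OmegaA]

lemma directedStep_mem_OmegaA (h : ℤ) : directedStep h ∈ OmegaA := by
  unfold directedStep
  split_ifs <;> simp [OmegaA]

lemma directedStep_snd_fst {h : ℤ} (hh : h = 1 ∨ h = -1 ∨ h = 0) :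
    (directedStep h).2.1 = h := by
  rcases hh with rfl | rfl | rfl <;> rfl

lemma snd_fst_of_mem_OmegaA {v : ℤ × ℤ × ℤ} (hv : v ∈ OmegaA) :
    v.2.1 = 1 ∨ v.2.1 = -1 ∨ v.2.1 = 0 := by
  rcases (mem_OmegaA_iff v).1 hv with rfl | rfl | rfl <;> simp

lemma directedStep_snd_fst_of_mem_OmegaA {v : ℤ × ℤ × ℤ} (hv : v ∈ OmegaA) :
    directedStep v.2.1 = v := by
  rcases (mem_OmegaA_iff v).1 hv with rfl | rfl | rfl <;> rfl

lemma directedStep_eq_indicators {h : ℤ} (hh : h = 1 ∨ h = -1 ∨ h = 0) :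
    directedStep h =
      ((if h = 0 then 1 else 0) - (if h = 1 then 1 else 0),
        (if h = 1 then 1 else 0) - (if h = -1 then 1 else 0),
        (if h = -1 then 1 else 0) - (if h = 0 then 1 else 0)) := by
  rcases hh with rfl | rfl | rfl <;> rfl

lemma sum_prefix_indicator_eq_prefixCount {n : ℕ} (e : Fin n → ℤ) (c : ℤ) (i : ℕ) :
    ∑ j ∈ univ.filter (fun j : Fin n => (j : ℕ) < i), (if e j = c then (1 : ℤ) else 0)
      = prefixCount e c i := by
  rw [sum_boole, filter_filter, prefixCount]

lemma triPos_directedStep (p : ℤ × ℤ × ℤ) {n : ℕ} {e : Fin n → ℤ}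
    (he : ∀ j, e j = 1 ∨ e j = -1 ∨ e j = 0) (i : ℕ) :
    triPos p (directedStep ∘ e) i = p +
      ((prefixCount e 0 i : ℤ) - prefixCount e 1 i,
        (prefixCount e 1 i : ℤ) - prefixCount e (-1) i,
        (prefixCount e (-1) i : ℤ) - prefixCount e 0 i) := by
  simp only [triPos, Function.comp_apply, directedStep_eq_indicators (he _)]
  simp only [Prod.ext_iff, Prod.fst_sum, Prod.snd_sum, sum_sub_distrib,
    sum_prefix_indicator_eq_prefixCount, Prod.fst_add, Prod.snd_add, and_self]

lemma nonneg3_triPos_directedStep_iff (L : ℕ) {n : ℕ} {e : Fin n → ℤ}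
    (he : ∀ j, e j = 1 ∨ e j = -1 ∨ e j = 0) (i : ℕ) :
    nonneg3 (triPos ((L : ℤ), 0, 0) (directedStep ∘ e) i) ↔
      prefixCount e (-1) i ≤ prefixCount e 1 i ∧
        prefixCount e 0 i ≤ prefixCount e (-1) i ∧
        prefixCount e 1 i ≤ L + prefixCount e 0 i := by
  rw [triPos_directedStep _ he, nonneg3]
  simp only [Prod.fst_add, Prod.snd_add]
  omega

lemma isBallot_iff_directed_walk (L : ℕ) {n : ℕ} {e : Fin n → ℤ}
    (he : ∀ j, e j = 1 ∨ e j = -1 ∨ e j = 0) :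
    IsBallot L n e ↔ ∀ i ≤ n, nonneg3 (triPos ((L : ℤ), 0, 0) (directedStep ∘ e) i) := by
  simp only [IsBallot, he, implies_true, true_and, nonneg3_triPos_directedStep_iff L he]

lemma directedStep_comp_snd_fst {n : ℕ} {s : Fin n → ℤ × ℤ × ℤ} (hs : ∀ j, s j ∈ OmegaA) :
    directedStep ∘ (fun j => (s j).2.1) = s :=
  funext fun j => directedStep_snd_fst_of_mem_OmegaA (hs j)

noncomputable def directedWalkEquivBallot (L n : ℕ) :
    ((triWalks ((L : ℤ), 0, 0) n).filter (fun s => ∀ j, s j ∈ OmegaA)) ≃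
      {e : Fin n → ℤ // IsBallot L n e} where
  toFun s := ⟨fun j => (s.1 j).2.1, by
    obtain ⟨hwalk, hA⟩ := mem_filter.1 s.2
    obtain ⟨-, hpos⟩ := mem_filter.1 hwalk
    rw [isBallot_iff_directed_walk L fun j => snd_fst_of_mem_OmegaA (hA j),
      directedStep_comp_snd_fst hA]
    exact hpos⟩
  invFun e := ⟨directedStep ∘ e.1, by
    simp only [triWalks, mem_filter, Fintype.mem_piFinset, Function.comp_apply]
    exact ⟨⟨fun j => mem_union_left _ (directedStep_mem_OmegaA _),
      (isBallot_iff_directed_walk L e.2.1).1 e.2⟩, fun j => directedStep_mem_OmegaA _⟩⟩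
  left_inv s := by
    obtain ⟨-, hA⟩ := mem_filter.1 s.2
    exact Subtype.ext (directedStep_comp_snd_fst hA)
  right_inv e := Subtype.ext (funext fun j => directedStep_snd_fst (e.2.1 j))

/-- Walks from the corner of a triangle of side-length `L` taking steps
only in Ω′ are equinumerous with three-candidate Ballot paths with excess `L`. -/
theorem corner_directed_walks_eq_ballot (L n : ℕ) :
    ((triWalks ((L : ℤ), 0, 0) n).filter (fun s => ∀ j, s j ∈ OmegaA)).card
      = Nat.card {e : Fin n → ℤ // IsBallot L n e} := by
  rw [← Nat.card_eq_finsetCard]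
  exact Nat.card_congr (directedWalkEquivBallot L n)
end

section
/- Fix u, v ∈ ℕ. Let G(x,y;t) be the formal power series in t with coefficients in the polynomial ring ℚ[x,y] whose coefficient of t^n is Σ x^i·y^j, summed over all n-step walks in the line model starting at (u,v), where (i,j) denotes the endpoint of the walk. Then the following identity holds in ℚ[x,y][[t]]: (x·y·(1+p²) − p·(x²+y²))·(1−p^(2u+2v+4))·G(x,y;t) = (1+p²)·( x^(u+1)·y^(v+1)·(1−p^(2u+2v+4)) − x^(u+v+2)·p^(v+1)·(1−p^(2u+2)) − y^(u+v+2)·p^(u+1)·(1−p^(2v+2)) ). -/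
open scoped Classical

/-- The step-set of the line model. -/
def lineSteps : Finset (ℤ × ℤ) := {(1,-1), (-1,1)}

/-- Position after `i` steps of the walk with step sequence `s` starting at `start`. -/
def linePos (start : ℤ × ℤ) {n : ℕ} (s : Fin n → ℤ × ℤ) (i : ℕ) : ℤ × ℤ :=
  start + ∑ j ∈ Finset.univ.filter (fun j : Fin n => (j : ℕ) < i), s j

/-- `n`-step walks of the line model starting at `start`, encoded by their step sequences:
every step lies in `{(1,-1),(-1,1)}` and every intermediate point lies in ℕ². -/
noncomputable def lineWalks (start : ℤ × ℤ) (n : ℕ) : Finset (Fin n → ℤ × ℤ) :=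
  (Fintype.piFinset fun _ : Fin n => lineSteps).filter
    (fun s => ∀ i ≤ n, 0 ≤ (linePos start s i).1 ∧ 0 ≤ (linePos start s i).2)

/-- The full generating function of the line model: the coefficient of `t^n` is the sum of
the endpoint monomials `x^i y^j` over all `n`-step walks starting at `(u,v)`. -/
noncomputable def lineGF (u v : ℕ) : PowerSeries (MvPolynomial (Fin 2) ℚ) :=
  PowerSeries.mk fun n =>
    ∑ s ∈ lineWalks ((u : ℤ), (v : ℤ)) n,
      MvPolynomial.X 0 ^ (linePos ((u : ℤ), (v : ℤ)) s n).1.toNat *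
        MvPolynomial.X 1 ^ (linePos ((u : ℤ), (v : ℤ)) s n).2.toNat

/-! Along a walk `i + j` is constant, so a walk from `(u, v)` stays on the segment
`i + j = N := u + v`, and the series `W (i, j)` counting walks by their endpoint satisfy
`W = [(i, j) = (u, v)] + t (W (i - 1, j + 1) + W (i + 1, j - 1))` there, with `W` vanishing just
off the segment. Summing against `x ^ i * y ^ j` gives the kernel equation
`(x y - t (x² + y²)) G = x ^ (u+1) y ^ (v+1) - t x ^ (N+2) W (N, 0) - t y ^ (N+2) W (0, N)`.
For `p = t (1 + p²)` the kernel is `(x - p y) (y - p x) / (1 + p²)`, so the substitutions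
`(x, y) = (p, 1)` and `(1, p)` give two linear equations for the corner series `W (0, N)` and
`W (N, 0)`; solving them and substituting back yields the closed form. -/

open Finset PowerSeries

lemma Finset.Nat.sum_antidiagonal_shift {M : Type*} [AddCommMonoid M] (n : ℕ) (f : ℕ × ℕ → M) :
    ∑ q ∈ antidiagonal n, f (q.1 + 1, q.2) + f (0, n + 1) =
      ∑ q ∈ antidiagonal n, f (q.1, q.2 + 1) + f (n + 1, 0) := by
  rw [add_comm, ← Nat.sum_antidiagonal_succ, Nat.sum_antidiagonal_succ', add_comm]

section EndpointSystem

variable {A : Type*} [CommRing A]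

def endpointSum (W : ℤ × ℤ → A) (N : ℕ) (x y : A) : A :=
  ∑ q ∈ antidiagonal N, W (q.1, q.2) * x ^ q.1 * y ^ q.2

structure IsLineEndpointGF (W : ℤ × ℤ → A) (t : A) (u v : ℕ) : Prop where
  eq_of_add_eq : ∀ i j : ℕ, i + j = u + v →
    W (i, j) = (if (i, j) = (u, v) then 1 else 0) + t * (W (i - 1, j + 1) + W (i + 1, j - 1))
  left_eq_zero : W (-1, u + v + 1) = 0
  right_eq_zero : W (u + v + 1, -1) = 0

namespace IsLineEndpointGF

variable {W : ℤ × ℤ → A} {t : A} {u v : ℕ}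

lemma map {B : Type*} [CommRing B] (h : IsLineEndpointGF W t u v) (f : A →+* B) :
    IsLineEndpointGF (f ∘ W) (f t) u v where
  eq_of_add_eq i j hij := by
    simp only [Function.comp_apply, h.eq_of_add_eq i j hij, map_add, map_mul, apply_ite f,
      map_one, map_zero]
  left_eq_zero := by simp [h.left_eq_zero]
  right_eq_zero := by simp [h.right_eq_zero]

theorem kernel_mul_endpointSum (h : IsLineEndpointGF W t u v) (x y : A) :
    (x * y - t * (x ^ 2 + y ^ 2)) * endpointSum W (u + v) x y
      = x ^ (u + 1) * y ^ (v + 1) - t * x ^ (u + v + 2) * W (u + v, 0)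
          - t * y ^ (u + v + 2) * W (0, u + v) := by
  -- Reindexing the neighbour sums leaves only the corner terms `W (u + v, 0)` and `W (0, u + v)`.
  have h₁ := Nat.sum_antidiagonal_shift (u + v) fun q => W (q.1 - 1, q.2) * x ^ (q.1 + 1) * y ^ q.2
  have h₂ := Nat.sum_antidiagonal_shift (u + v) fun q => W (q.1, q.2 - 1) * x ^ q.1 * y ^ (q.2 + 1)
  push_cast at h₁ h₂
  simp only [add_sub_cancel_right, h.left_eq_zero, h.right_eq_zero, zero_mul, add_zero, pow_zero,
    mul_one, Nat.add_assoc, Nat.reduceAdd] at h₁ h₂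
  have hsource : ∑ q ∈ antidiagonal (u + v),
      (if q = (u, v) then x ^ (q.1 + 1) * y ^ (q.2 + 1) else 0) = x ^ (u + 1) * y ^ (v + 1) := by
    simp
  have hterm : ∀ q ∈ antidiagonal (u + v),
      (x * y - t * (x ^ 2 + y ^ 2)) * (W (q.1, q.2) * x ^ q.1 * y ^ q.2)
        = (if q = (u, v) then x ^ (q.1 + 1) * y ^ (q.2 + 1) else 0)
          + t * (W (q.1 - 1, q.2 + 1) * x ^ (q.1 + 1) * y ^ (q.2 + 1))
          + t * (W (q.1 + 1, q.2 - 1) * x ^ (q.1 + 1) * y ^ (q.2 + 1))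
          - t * (W (q.1, q.2) * x ^ (q.1 + 2) * y ^ q.2)
          - t * (W (q.1, q.2) * x ^ q.1 * y ^ (q.2 + 2)) := fun q hq => by
    rw [h.eq_of_add_eq q.1 q.2 (mem_antidiagonal.mp hq)]
    split_ifs <;> ring
  rw [endpointSum, mul_sum, sum_congr rfl hterm]
  simp only [sum_add_distrib, sum_sub_distrib, ← mul_sum, hsource]
  linear_combination -t * h₁ + t * h₂

theorem kernel_mul_endpointSum_of_eq (h : IsLineEndpointGF W t u v) {p : A}
    (hp : p = t * (1 + p ^ 2)) (x y : A) :
    (x * y * (1 + p ^ 2) - p * (x ^ 2 + y ^ 2)) * endpointSum W (u + v) x y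
      = (1 + p ^ 2) * x ^ (u + 1) * y ^ (v + 1) - p * x ^ (u + v + 2) * W (u + v, 0)
          - p * y ^ (u + v + 2) * W (0, u + v) := by
  linear_combination (1 + p ^ 2) * h.kernel_mul_endpointSum x y
    + (x ^ (u + v + 2) * W (u + v, 0) + y ^ (u + v + 2) * W (0, u + v)
      - (x ^ 2 + y ^ 2) * endpointSum W (u + v) x y) * hp

theorem corner_eq [IsDomain A] (h : IsLineEndpointGF W t u v) {p : A}
    (hp : p = t * (1 + p ^ 2)) (ht : t ≠ 0) :
    (1 - p ^ (2 * u + 2 * v + 4)) * W (0, u + v) = (1 + p ^ 2) * p ^ u * (1 - p ^ (2 * v + 2))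
      ∧ (1 - p ^ (2 * u + 2 * v + 4)) * W (u + v, 0)
        = (1 + p ^ 2) * p ^ v * (1 - p ^ (2 * u + 2)) := by
  have hp0 : p ≠ 0 := by
    rintro rfl
    exact ht (by simpa using hp.symm)
  have k₁ : W (0, u + v) + p ^ (u + v + 2) * W (u + v, 0) = (1 + p ^ 2) * p ^ u := by
    have := h.kernel_mul_endpointSum_of_eq hp p 1
    refine sub_eq_zero.mp ((mul_eq_zero.mp ?_).resolve_left hp0)
    linear_combination this
  have k₂ : W (u + v, 0) + p ^ (u + v + 2) * W (0, u + v) = (1 + p ^ 2) * p ^ v := by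
    have := h.kernel_mul_endpointSum_of_eq hp 1 p
    refine sub_eq_zero.mp ((mul_eq_zero.mp ?_).resolve_left hp0)
    linear_combination this
  exact ⟨by linear_combination k₁ - p ^ (u + v + 2) * k₂,
    by linear_combination k₂ - p ^ (u + v + 2) * k₁⟩

end IsLineEndpointGF

end EndpointSystem

section Walks

variable (start : ℤ × ℤ)

lemma linePos_zero {n : ℕ} (s : Fin n → ℤ × ℤ) : linePos start s 0 = start := by
  simp [linePos]

lemma linePos_init {n : ℕ} (s : Fin (n + 1) → ℤ × ℤ) {k : ℕ} (hk : k ≤ n) :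
    linePos start s k = linePos start (Fin.init s) k := by
  simp only [linePos, sum_filter, Fin.sum_univ_castSucc, Fin.val_castSucc, Fin.val_last,
    Fin.init]
  simp [show ¬ n < k by omega]

lemma linePos_succ {n : ℕ} (s : Fin (n + 1) → ℤ × ℤ) :
    linePos start s (n + 1) = linePos start (Fin.init s) n + s (Fin.last n) := by
  simp only [linePos, sum_filter, Fin.sum_univ_castSucc, Fin.val_castSucc, Fin.val_last,
    Fin.init]
  simp [add_assoc]

lemma linePos_fst_add_snd {n : ℕ} {s : Fin n → ℤ × ℤ} (hs : ∀ j, s j ∈ lineSteps) (k : ℕ) :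
    (linePos start s k).1 + (linePos start s k).2 = start.1 + start.2 := by
  have step_sum : ∀ j, (s j).1 + (s j).2 = 0 := fun j => by
    have := hs j
    simp only [lineSteps, mem_insert, mem_singleton] at this
    rcases this with h | h <;> simp [h]
  simp only [linePos, Prod.fst_add, Prod.snd_add, Prod.fst_sum, Prod.snd_sum]
  rw [add_add_add_comm, ← sum_add_distrib, sum_eq_zero fun j _ => step_sum j, add_zero]

lemma mem_lineWalks_succ {n : ℕ} {s : Fin (n + 1) → ℤ × ℤ} :
    s ∈ lineWalks start (n + 1) ↔ Fin.init s ∈ lineWalks start n ∧ s (Fin.last n) ∈ lineSteps ∧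
      0 ≤ (linePos start s (n + 1)).1 ∧ 0 ≤ (linePos start s (n + 1)).2 := by
  simp only [lineWalks, mem_filter, Fintype.mem_piFinset]
  constructor
  · rintro ⟨hsteps, hpos⟩
    exact ⟨⟨fun j => hsteps _, fun k hk => linePos_init start s hk ▸ hpos k (by omega)⟩,
      hsteps _, hpos _ le_rfl⟩
  · rintro ⟨⟨hsteps, hpos⟩, hlast, hend⟩
    refine ⟨fun j => Fin.lastCases (motive := fun j => s j ∈ lineSteps) hlast hsteps j,
      fun k hk => ?_⟩
    rcases hk.lt_or_eq with hk | rfl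
    · rw [linePos_init start s (by omega)]
      exact hpos k (by omega)
    · exact hend

lemma card_lineWalks_endpoint_zero (hstart : 0 ≤ start.1 ∧ 0 ≤ start.2) (e : ℤ × ℤ) :
    #{s ∈ lineWalks start 0 | linePos start s 0 = e} = if e = start then 1 else 0 := by
  have : lineWalks start 0 = univ := by
    ext s
    simp [lineWalks, linePos_zero, hstart]
  simp [this, linePos_zero, eq_comm, apply_ite]

lemma card_lineWalks_endpoint_succ {n : ℕ} {e : ℤ × ℤ} (he : 0 ≤ e.1 ∧ 0 ≤ e.2) :
    #{s ∈ lineWalks start (n + 1) | linePos start s (n + 1) = e} =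
      ∑ z ∈ lineSteps, #{w ∈ lineWalks start n | linePos start w n = e - z} := by
  rw [card_eq_sum_card_fiberwise (f := fun s => s (Fin.last n)) (t := lineSteps)]
  · refine sum_congr rfl fun z hz => ?_
    refine card_nbij' Fin.init (fun w => (Fin.snoc w z : Fin (n + 1) → ℤ × ℤ)) ?_ ?_ ?_ ?_
    · intro s hs
      simp only [mem_coe, mem_filter, mem_lineWalks_succ] at hs ⊢
      obtain ⟨⟨⟨hinit, -⟩, hend⟩, rfl⟩ := hs
      exact ⟨hinit, by rw [← hend, linePos_succ, add_sub_cancel_right]⟩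
    · intro w hw
      simp only [mem_coe, mem_filter, mem_lineWalks_succ, Fin.init_snoc, Fin.snoc_last,
        linePos_succ, and_true] at hw ⊢
      obtain ⟨hw, hend⟩ := hw
      rw [hend, sub_add_cancel]
      exact ⟨⟨hw, hz, he⟩, rfl⟩
    · intro s hs
      simp only [mem_coe, mem_filter] at hs
      rw [← hs.2]
      exact Fin.snoc_init_self s
    · intro w _
      exact Fin.init_snoc _ _
  · intro s hs
    simp only [mem_coe, mem_filter, mem_lineWalks_succ] at hs
    exact hs.1.2.1

noncomputable def lineEndGF (e : ℤ × ℤ) : PowerSeries ℚ :=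
  PowerSeries.mk fun n => #{s ∈ lineWalks start n | linePos start s n = e}

lemma lineEndGF_eq_zero {e : ℤ × ℤ} (he : e.1 < 0 ∨ e.2 < 0) : lineEndGF start e = 0 := by
  ext n
  simp only [lineEndGF, coeff_mk, map_zero, Nat.cast_eq_zero, card_eq_zero,
    filter_eq_empty_iff]
  intro s hs hend
  have := (mem_filter.mp hs).2 n le_rfl
  rw [hend] at this
  omega

lemma lineEndGF_eq (hstart : 0 ≤ start.1 ∧ 0 ≤ start.2) {e : ℤ × ℤ} (he : 0 ≤ e.1 ∧ 0 ≤ e.2) :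
    lineEndGF start e =
      (if e = start then 1 else 0) + X * ∑ z ∈ lineSteps, lineEndGF start (e - z) := by
  ext (_ | n)
  · simp [lineEndGF, card_lineWalks_endpoint_zero start hstart, apply_ite]
  · simp [lineEndGF, coeff_succ_X_mul, card_lineWalks_endpoint_succ start he, apply_ite]

end Walks

lemma isLineEndpointGF_lineEndGF (u v : ℕ) : IsLineEndpointGF (lineEndGF (u, v)) X u v where
  eq_of_add_eq i j _ := by
    rw [lineEndGF_eq _ (by simp) (by simp), lineSteps, sum_pair (by decide)]
    simp [sub_eq_add_neg]
  left_eq_zero := lineEndGF_eq_zero _ (by simp)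
  right_eq_zero := lineEndGF_eq_zero _ (by simp)

lemma lineGF_eq_sum (u v : ℕ) :
    lineGF u v = endpointSum (PowerSeries.map MvPolynomial.C ∘ lineEndGF (u, v)) (u + v)
      (C (MvPolynomial.X 0)) (C (MvPolynomial.X 1)) := by
  rw [endpointSum]
  refine PowerSeries.ext fun n => ?_
  have hend : ∀ s ∈ lineWalks (u, v) n, 0 ≤ (linePos (u, v) s n).1 ∧
      0 ≤ (linePos (u, v) s n).2 ∧ (linePos (u, v) s n).1 + (linePos (u, v) s n).2 = u + v :=
    fun s hs => by
      simp only [lineWalks, mem_filter, Fintype.mem_piFinset] at hs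
      exact ⟨(hs.2 n le_rfl).1, (hs.2 n le_rfl).2, linePos_fst_add_snd _ hs.1 n⟩
  rw [lineGF, coeff_mk, map_sum, ← sum_fiberwise_of_maps_to
    (g := fun s => ((linePos (u, v) s n).1.toNat, (linePos (u, v) s n).2.toNat))
    (t := antidiagonal (u + v)) fun s hs => by
      have := hend s hs
      rw [HasAntidiagonal.mem_antidiagonal]
      omega]
  refine sum_congr rfl fun q _ => ?_
  rw [Function.comp_apply, ← map_pow, ← map_pow, mul_assoc, ← map_mul, coeff_mul_C, coeff_map,
    lineEndGF, coeff_mk, map_natCast, ← nsmul_eq_mul, ← sum_const]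
  refine sum_congr (filter_congr fun s hs => ?_) fun s hs => ?_
  · have := hend s hs
    simp only [Prod.ext_iff]
    omega
  · have := hend s (mem_filter.mp hs).1
    have hq := (mem_filter.mp hs).2
    simp only [Prod.ext_iff] at hq
    rw [show (linePos (u, v) s n).1.toNat = q.1 by omega,
      show (linePos (u, v) s n).2.toNat = q.2 by omega]

theorem line_full_gf_general (u v : ℕ) (p : PowerSeries ℚ)
    (hp : p = PowerSeries.X * (1 + p ^ 2)) :
    let P : PowerSeries (MvPolynomial (Fin 2) ℚ) :=
      PowerSeries.map (MvPolynomial.C : ℚ →+* MvPolynomial (Fin 2) ℚ) p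
    let x : PowerSeries (MvPolynomial (Fin 2) ℚ) :=
      PowerSeries.C (R := MvPolynomial (Fin 2) ℚ) (MvPolynomial.X 0)
    let y : PowerSeries (MvPolynomial (Fin 2) ℚ) :=
      PowerSeries.C (R := MvPolynomial (Fin 2) ℚ) (MvPolynomial.X 1)
    (x * y * (1 + P ^ 2) - P * (x ^ 2 + y ^ 2)) * (1 - P ^ (2 * u + 2 * v + 4)) *
        lineGF u v
      = (1 + P ^ 2) *
          (x ^ (u + 1) * y ^ (v + 1) * (1 - P ^ (2 * u + 2 * v + 4))
            - x ^ (u + v + 2) * P ^ (v + 1) * (1 - P ^ (2 * u + 2))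
            - y ^ (u + v + 2) * P ^ (u + 1) * (1 - P ^ (2 * v + 2))) := by
  dsimp only
  have hW := (isLineEndpointGF_lineEndGF u v).map (PowerSeries.map (MvPolynomial.C (σ := Fin 2)))
  have hP := congrArg (PowerSeries.map (MvPolynomial.C (σ := Fin 2))) hp
  rw [map_mul, map_add, map_pow, map_one] at hP
  obtain ⟨hleft, hright⟩ := hW.corner_eq hP (by simp)
  have hkernel := hW.kernel_mul_endpointSum_of_eq hP (C (MvPolynomial.X 0)) (C (MvPolynomial.X 1))
  rw [lineGF_eq_sum]
  set P := PowerSeries.map (MvPolynomial.C (σ := Fin 2)) p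
  set x : (MvPolynomial (Fin 2) ℚ)⟦X⟧ := C (MvPolynomial.X 0)
  set y : (MvPolynomial (Fin 2) ℚ)⟦X⟧ := C (MvPolynomial.X 1)
  linear_combination (1 - P ^ (2 * u + 2 * v + 4)) * hkernel
    - P * x ^ (u + v + 2) * hright - P * y ^ (u + v + 2) * hleft

/-- Closed form for the full generating function of the line model
(Proposition 1 of Mortimer–Prellberg, in cleared-denominator form). -/
theorem line_full_gf (u v : ℕ) (p : PowerSeries ℚ)
    (hp0 : PowerSeries.constantCoeff (R := ℚ) p = 0)
    (hp : p = PowerSeries.X * (1 + p ^ 2)) :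
    let P : PowerSeries (MvPolynomial (Fin 2) ℚ) :=
      PowerSeries.map (MvPolynomial.C : ℚ →+* MvPolynomial (Fin 2) ℚ) p
    let x : PowerSeries (MvPolynomial (Fin 2) ℚ) :=
      PowerSeries.C (R := MvPolynomial (Fin 2) ℚ) (MvPolynomial.X 0)
    let y : PowerSeries (MvPolynomial (Fin 2) ℚ) :=
      PowerSeries.C (R := MvPolynomial (Fin 2) ℚ) (MvPolynomial.X 1)
    (x * y * (1 + P ^ 2) - P * (x ^ 2 + y ^ 2)) * (1 - P ^ (2 * u + 2 * v + 4)) *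
        lineGF u v
      = (1 + P ^ 2) *
          (x ^ (u + 1) * y ^ (v + 1) * (1 - P ^ (2 * u + 2 * v + 4))
            - x ^ (u + v + 2) * P ^ (v + 1) * (1 - P ^ (2 * u + 2))
            - y ^ (u + v + 2) * P ^ (u + 1) * (1 - P ^ (2 * v + 2))) :=
  line_full_gf_general u v p hp
end

section
/- Fix u, v, w ∈ ℕ and weights α, β ∈ ℚ, and set L = u+v+w. Let A, B, C ∈ ℚ[[t]] be the formal power series whose coefficients of t^n are the total weights of n-step walks in the triangle model starting at (u,v,w) whose endpoint has first, second, respectively third, coordinate equal to 0. Then (α+β)·t·(A+B+C)·(1−p^(L+3)) = p^(u+1) + p^(v+1) + p^(w+1) − p^(v+w+2) − p^(u+w+2) − p^(u+v+2) in ℚ[[t]]. -/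
/-!
On the plane `x₁ + x₂ + x₃ = L` put `ψ(x) = Σᵢ (p^(xᵢ+1) - p^(L+2-xᵢ))`. Every monomial `p^k`
satisfies `t(α+β)(p^(k-1) + p^k + p^(k+1)) = p^k`, which is the equation defining `p`, and each
class of steps moves every coordinate by `-1, 0, +1` once each; hence `t Σ_v w(v) ψ(x+v) = ψ(x)`.

Pair `ψ` with the generating functions `F(x)` of the walks from `x₀` ending at `x`. They satisfy the
last-step recurrence `F = δ_{x₀} + t Σ_v w(v) F(· - v)` on `ℕ³`; moving the shift onto `ψ`,
harmonicity cancels everything except `ψ(x₀)` and the steps leaving `ℕ³`. Such a step ends at a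
point with a coordinate `-1`; there the other two coordinates add up to `L + 1`, and since each
summand of `ψ` changes sign under `k ↦ L + 1 - k`, `ψ = 1 - p^(L+3)`. From a point with `xᵢ = 0`
exactly one step of each class leaves through `xᵢ = -1`.
-/

open scoped Classical

open PowerSeries Finset

lemma disjoint_OmegaA_OmegaB : Disjoint OmegaA OmegaB := by decide

def planeSum : ℤ × ℤ × ℤ →+ ℤ :=
  AddMonoidHom.mk' (fun x => x.1 + x.2.1 + x.2.2) fun x y => by
    simp only [Prod.fst_add, Prod.snd_add]; ring

lemma planeSum_apply (x : ℤ × ℤ × ℤ) : planeSum x = x.1 + x.2.1 + x.2.2 := rfl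

lemma planeSum_eq_zero_of_mem {v : ℤ × ℤ × ℤ} (hv : v ∈ OmegaFull) : planeSum v = 0 := by
  simp only [OmegaFull, OmegaA, OmegaB, mem_union, mem_insert, mem_singleton] at hv
  rcases hv with (rfl | rfl | rfl) | (rfl | rfl | rfl) <;> rfl

lemma nonneg3_add_iff {y v : ℤ × ℤ × ℤ} (hy : nonneg3 y) (hv : v ∈ OmegaFull) :
    nonneg3 (y + v)
      ↔ ¬(v.1 = -1 ∧ y.1 = 0) ∧ ¬(v.2.1 = -1 ∧ y.2.1 = 0) ∧ ¬(v.2.2 = -1 ∧ y.2.2 = 0) := by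
  simp only [OmegaFull, OmegaA, OmegaB, mem_union, mem_insert, mem_singleton] at hv
  obtain ⟨h₁, h₂, h₃⟩ := hy
  rcases hv with (rfl | rfl | rfl) | (rfl | rfl | rfl) <;>
    dsimp only [nonneg3, Prod.fst_add, Prod.snd_add] <;> omega

noncomputable def triangle (L : ℕ) : Finset (ℤ × ℤ × ℤ) :=
  (Icc (0 : ℤ) L ×ˢ Icc (0 : ℤ) L ×ˢ Icc (0 : ℤ) L).filter fun x => planeSum x = L

lemma mem_triangle {L : ℕ} {x : ℤ × ℤ × ℤ} : x ∈ triangle L ↔ nonneg3 x ∧ planeSum x = L := by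
  rw [triangle, mem_filter]
  simp only [mem_product, mem_Icc, nonneg3, planeSum_apply]
  omega

lemma add_mem_triangle {L : ℕ} {y v : ℤ × ℤ × ℤ} (hy : y ∈ triangle L) (hv : v ∈ OmegaFull)
    (h : nonneg3 (y + v)) : y + v ∈ triangle L := by
  rw [mem_triangle, map_add, planeSum_eq_zero_of_mem hv, add_zero] at *
  exact ⟨h, hy.2⟩

section Walks

variable {R : Type*} [CommSemiring R] (α β : R)

def stepWeight (v : ℤ × ℤ × ℤ) : R := if v ∈ OmegaA then α else β

def walkWeight {n : ℕ} (s : Fin n → ℤ × ℤ × ℤ) : R := ∏ j, stepWeight α β (s j)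

lemma walkWeight_snoc {n : ℕ} (s : Fin n → ℤ × ℤ × ℤ) (v : ℤ × ℤ × ℤ) :
    walkWeight α β (Fin.snoc s v : Fin (n + 1) → ℤ × ℤ × ℤ)
      = stepWeight α β v * walkWeight α β s := by
  simp [walkWeight, Fin.prod_univ_castSucc, mul_comm]

lemma pow_countA_mul_pow_countB {n : ℕ} {s : Fin n → ℤ × ℤ × ℤ}
    (hs : ∀ j, s j ∈ OmegaFull) : α ^ countA s * β ^ countB s = walkWeight α β s := by
  have hB : ∀ j, s j ∉ OmegaA ↔ s j ∈ OmegaB := fun j =>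
    ⟨(mem_union.1 (hs j)).resolve_left, fun h => disjoint_right.1 disjoint_OmegaA_OmegaB h⟩
  simp only [walkWeight, stepWeight]
  rw [prod_ite, prod_const, prod_const, countA, countB, filter_congr fun j _ => hB j]

lemma sum_OmegaFull_stepWeight (f : ℤ × ℤ × ℤ → R⟦X⟧) :
    ∑ v ∈ OmegaFull, C (stepWeight α β v) * f v
      = C α * (f (1, 0, -1) + f (-1, 1, 0) + f (0, -1, 1))
        + C β * (f (1, -1, 0) + f (-1, 0, 1) + f (0, 1, -1)) := by
  have hA : ∀ v ∈ OmegaA, C (stepWeight α β v) * f v = C α * f v := fun v hv => by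
    rw [stepWeight, if_pos hv]
  have hB : ∀ v ∈ OmegaB, C (stepWeight α β v) * f v = C β * f v := fun v hv => by
    rw [stepWeight, if_neg (disjoint_right.1 disjoint_OmegaA_OmegaB hv)]
  rw [OmegaFull, sum_union disjoint_OmegaA_OmegaB, sum_congr rfl hA, sum_congr rfl hB,
    ← mul_sum, ← mul_sum]
  simp [OmegaA, OmegaB, add_assoc]

lemma triPos_zero (st : ℤ × ℤ × ℤ) {n : ℕ} (s : Fin n → ℤ × ℤ × ℤ) : triPos st s 0 = st := by
  simp [triPos]

lemma triPos_snoc (st : ℤ × ℤ × ℤ) {n : ℕ} (s : Fin n → ℤ × ℤ × ℤ) (v : ℤ × ℤ × ℤ) (i : ℕ) :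
    triPos st (Fin.snoc s v : Fin (n + 1) → ℤ × ℤ × ℤ) i
      = triPos st s i + if n < i then v else 0 := by
  simp [triPos, sum_filter, Fin.sum_univ_castSucc, add_assoc]

lemma triPos_snoc_of_le (st : ℤ × ℤ × ℤ) {n : ℕ} (s : Fin n → ℤ × ℤ × ℤ) (v : ℤ × ℤ × ℤ)
    {i : ℕ} (hi : i ≤ n) :
    triPos st (Fin.snoc s v : Fin (n + 1) → ℤ × ℤ × ℤ) i = triPos st s i := by
  simp [triPos_snoc, hi.not_gt]

lemma triPos_snoc_succ (st : ℤ × ℤ × ℤ) {n : ℕ} (s : Fin n → ℤ × ℤ × ℤ) (v : ℤ × ℤ × ℤ) :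
    triPos st (Fin.snoc s v : Fin (n + 1) → ℤ × ℤ × ℤ) (n + 1) = triPos st s n + v := by
  rw [triPos_snoc, if_pos n.lt_succ_self]
  congr 1
  simp only [triPos, add_right_inj]
  exact sum_congr (filter_congr fun j _ => by omega) fun _ _ => rfl

lemma planeSum_triPos (st : ℤ × ℤ × ℤ) {n : ℕ} {s : Fin n → ℤ × ℤ × ℤ}
    (hs : ∀ j, s j ∈ OmegaFull) (i : ℕ) : planeSum (triPos st s i) = planeSum st := by
  simp [triPos, map_sum, planeSum_eq_zero_of_mem (hs _)]

lemma mem_triWalks {st : ℤ × ℤ × ℤ} {n : ℕ} {s : Fin n → ℤ × ℤ × ℤ} :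
    s ∈ triWalks st n ↔ (∀ j, s j ∈ OmegaFull) ∧ ∀ i ≤ n, nonneg3 (triPos st s i) := by
  simp [triWalks, Fintype.mem_piFinset]

lemma snoc_mem_triWalks_iff {st : ℤ × ℤ × ℤ} {n : ℕ} {s : Fin n → ℤ × ℤ × ℤ}
    {v : ℤ × ℤ × ℤ} :
    (Fin.snoc s v : Fin (n + 1) → ℤ × ℤ × ℤ) ∈ triWalks st (n + 1)
      ↔ s ∈ triWalks st n ∧ v ∈ OmegaFull ∧ nonneg3 (triPos st s n + v) := by
  simp only [mem_triWalks, Fin.forall_fin_succ', Fin.snoc_castSucc, Fin.snoc_last]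
  constructor
  · rintro ⟨⟨hs, hv⟩, hpos⟩
    refine ⟨⟨hs, fun i hi => ?_⟩, hv, ?_⟩
    · rw [← triPos_snoc_of_le st s v hi]; exact hpos i (by omega)
    · rw [← triPos_snoc_succ]; exact hpos (n + 1) le_rfl
  · rintro ⟨⟨hs, hpos⟩, hv, hlast⟩
    refine ⟨⟨hs, hv⟩, fun i hi => ?_⟩
    rcases Nat.le_succ_iff.1 hi with hi | rfl
    · rw [triPos_snoc_of_le st s v hi]; exact hpos i hi
    · rwa [triPos_snoc_succ]

noncomputable def walkGF (x₀ x : ℤ × ℤ × ℤ) : R⟦X⟧ :=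
  mk fun n => ∑ s ∈ (triWalks x₀ n).filter (fun s => triPos x₀ s n = x), walkWeight α β s

lemma coeff_zero_walkGF {x₀ : ℤ × ℤ × ℤ} (h₀ : nonneg3 x₀) (x : ℤ × ℤ × ℤ) :
    coeff 0 (walkGF α β x₀ x) = if x = x₀ then 1 else 0 := by
  have hW : triWalks x₀ 0 = {Fin.elim0} :=
    eq_singleton_iff_unique_mem.2 ⟨mem_triWalks.2 ⟨fun j => j.elim0, fun i hi => by
      rw [Nat.le_zero.1 hi, triPos_zero]; exact h₀⟩, fun _ _ => Subsingleton.elim _ _⟩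
  by_cases h : x = x₀
  · simp [walkGF, hW, triPos_zero, walkWeight, h]
  · simp [walkGF, triPos_zero, h, Ne.symm h]

lemma coeff_succ_walkGF (x₀ : ℤ × ℤ × ℤ) {x : ℤ × ℤ × ℤ} (hx : nonneg3 x) (n : ℕ) :
    coeff (n + 1) (walkGF α β x₀ x)
      = ∑ v ∈ OmegaFull, stepWeight α β v * coeff n (walkGF α β x₀ (x - v)) := by
  simp only [walkGF, coeff_mk, mul_sum]
  rw [← sum_fiberwise_of_maps_to (g := fun s : Fin (n + 1) → ℤ × ℤ × ℤ => s (Fin.last n))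
    fun s hs => (mem_triWalks.1 (mem_filter.1 hs).1).1 _]
  refine sum_congr rfl fun v hv => ?_
  refine sum_nbij' Fin.init (fun s => Fin.snoc s v) ?_ ?_ ?_ (fun _ _ => Fin.init_snoc _ _) ?_
  · intro s hs
    simp only [mem_filter] at hs ⊢
    obtain ⟨s, w, rfl⟩ : ∃ s' w, s = Fin.snoc s' w := ⟨_, _, (Fin.snoc_init_self s).symm⟩
    simp only [snoc_mem_triWalks_iff, triPos_snoc_succ, Fin.snoc_last, Fin.init_snoc] at hs ⊢
    obtain ⟨⟨hW, rfl⟩, rfl⟩ := hs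
    exact ⟨hW.1, by rw [add_sub_cancel_right]⟩
  · intro s hs
    simp only [mem_filter] at hs ⊢
    have hend : triPos x₀ (Fin.snoc s v : Fin (n + 1) → ℤ × ℤ × ℤ) (n + 1) = x := by
      rw [triPos_snoc_succ, hs.2, sub_add_cancel]
    refine ⟨⟨snoc_mem_triWalks_iff.2 ⟨hs.1, hv, ?_⟩, hend⟩, Fin.snoc_last _ _⟩
    rwa [← triPos_snoc_succ, hend]
  · intro s hs
    simp only [mem_filter] at hs
    rw [← hs.2]; exact Fin.snoc_init_self s
  · intro s hs
    simp only [mem_filter] at hs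
    rw [← hs.2, ← walkWeight_snoc, Fin.snoc_init_self]

lemma walkGF_eq {x₀ : ℤ × ℤ × ℤ} (h₀ : nonneg3 x₀) {x : ℤ × ℤ × ℤ} (hx : nonneg3 x) :
    walkGF α β x₀ x = (if x = x₀ then 1 else 0)
      + X * ∑ v ∈ OmegaFull, C (stepWeight α β v) * walkGF α β x₀ (x - v) := by
  ext (_ | n)
  · simp [coeff_zero_walkGF α β h₀]
  · simp [coeff_succ_walkGF α β x₀ hx, apply_ite (coeff (n + 1)), coeff_one]

lemma sum_mul_walkGF {x₀ : ℤ × ℤ × ℤ} (h₀ : nonneg3 x₀) (f : ℤ × ℤ × ℤ → R⟦X⟧)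
    {s : Finset (ℤ × ℤ × ℤ)} (hx₀ : x₀ ∈ s) (hs : ∀ y ∈ s, nonneg3 y) :
    ∑ y ∈ s, f y * walkGF α β x₀ y
      = f x₀
        + X * ∑ v ∈ OmegaFull, C (stepWeight α β v) * ∑ y ∈ s, f y * walkGF α β x₀ (y - v) := by
  have hstep : ∀ y ∈ s, f y * walkGF α β x₀ y = (if y = x₀ then f y else 0)
      + X * ∑ v ∈ OmegaFull, C (stepWeight α β v) * (f y * walkGF α β x₀ (y - v)) := fun y hy => by
    rw [walkGF_eq α β h₀ (hs y hy)]
    simp only [mul_add, mul_ite, mul_one, mul_zero, mul_sum]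
    exact congrArg _ (sum_congr rfl fun v _ => by ring)
  rw [sum_congr rfl hstep, sum_add_distrib, sum_ite_eq', if_pos hx₀, ← mul_sum, sum_comm]
  simp only [← mul_sum]

lemma walkGF_eq_zero_of_notMem {x₀ x : ℤ × ℤ × ℤ} {L : ℕ} (hL : planeSum x₀ = L)
    (hx : x ∉ triangle L) : walkGF α β x₀ x = 0 := by
  ext n
  rw [walkGF, coeff_mk, map_zero]
  refine sum_eq_zero fun s hs => ?_
  obtain ⟨hW, rfl⟩ := mem_filter.1 hs
  obtain ⟨hsteps, hpos⟩ := mem_triWalks.1 hW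
  exact absurd (mem_triangle.2 ⟨hpos n le_rfl, by rw [planeSum_triPos x₀ hsteps, hL]⟩) hx

lemma sum_mul_walkGF_sub {x₀ : ℤ × ℤ × ℤ} {L : ℕ} (hL : planeSum x₀ = L)
    (f : ℤ × ℤ × ℤ → R⟦X⟧) {v : ℤ × ℤ × ℤ} (hv : v ∈ OmegaFull) :
    ∑ y ∈ triangle L, f y * walkGF α β x₀ (y - v)
      = ∑ z ∈ triangle L, (if nonneg3 (z + v) then f (z + v) else 0) * walkGF α β x₀ z := by
  have hsupp : ∀ z, walkGF α β x₀ z ≠ 0 → z ∈ triangle L := fun z hz => by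
    by_contra h; exact hz (walkGF_eq_zero_of_notMem α β hL h)
  refine sum_bij_ne_zero (fun y _ _ => y - v) (fun y _ h => hsupp _ (right_ne_zero_of_mul h))
    (fun _ _ _ _ _ _ h => sub_left_injective h) (fun z hz h => ?_) (fun y hy _ => ?_)
  · have hzv : nonneg3 (z + v) := by by_contra hn; simp [hn] at h
    exact ⟨z + v, add_mem_triangle hz hv hzv, by simpa [hzv] using h, add_sub_cancel_right z v⟩
  · simp [(mem_triangle.1 hy).1]

lemma mk_sum_filter_triWalks {x₀ : ℤ × ℤ × ℤ} {L : ℕ} (hL : planeSum x₀ = L)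
    (g : ℤ × ℤ × ℤ → ℤ) :
    (mk fun n => ∑ s ∈ (triWalks x₀ n).filter (fun s => g (triPos x₀ s n) = 0),
        α ^ countA s * β ^ countB s)
      = ∑ y ∈ (triangle L).filter (fun y => g y = 0), walkGF α β x₀ y := by
  ext n
  simp only [coeff_mk, map_sum, walkGF]
  rw [← sum_fiberwise_of_maps_to (g := fun s => triPos x₀ s n) fun s hs => ?_]
  · refine sum_congr rfl fun y hy => ?_
    rw [filter_filter]
    refine sum_congr (filter_congr fun s _ => ?_) fun s hs => ?_
    · exact ⟨And.right, fun h => ⟨h ▸ (mem_filter.1 hy).2, h⟩⟩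
    · exact pow_countA_mul_pow_countB α β (mem_triWalks.1 (mem_filter.1 hs).1).1
  · obtain ⟨hW, hg⟩ := mem_filter.1 hs
    obtain ⟨hsteps, hpos⟩ := mem_triWalks.1 hW
    exact mem_filter.2 ⟨mem_triangle.2 ⟨hpos n le_rfl, by rw [planeSum_triPos x₀ hsteps, hL]⟩, hg⟩

end Walks

section Harmonic

variable {R : Type*} [CommRing R] (p : R⟦X⟧) (L : ℕ)

/-- Only evaluated at `-1 ≤ k ≤ L + 1`, where neither `toNat` truncates. -/
noncomputable def sideHarmonic (k : ℤ) : R⟦X⟧ :=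
  p ^ (k + 1).toNat - p ^ ((L : ℤ) + 2 - k).toNat

/-- On the plane `x₁ + x₂ + x₃ = L` this is the paper's
`p^(x₁+1) + p^(x₂+1) + p^(x₃+1) - p^(x₂+x₃+2) - p^(x₁+x₃+2) - p^(x₁+x₂+2)`. -/
noncomputable def triHarmonic (x : ℤ × ℤ × ℤ) : R⟦X⟧ :=
  sideHarmonic p L x.1 + sideHarmonic p L x.2.1 + sideHarmonic p L x.2.2

lemma sideHarmonic_natCast {a b : ℕ} (h : a + b = L) :
    sideHarmonic p L a = p ^ (a + 1) - p ^ (b + 2) := by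
  rw [sideHarmonic, show ((a : ℤ) + 1).toNat = a + 1 by omega,
    show ((L : ℤ) + 2 - a).toNat = b + 2 by omega]

lemma sideHarmonic_neg_one : sideHarmonic p L (-1) = 1 - p ^ (L + 3) := by
  rw [sideHarmonic, show ((-1 : ℤ) + 1).toNat = 0 by rfl,
    show ((L : ℤ) + 2 - -1).toNat = L + 3 by omega, pow_zero]

lemma sideHarmonic_reflect (k : ℤ) : sideHarmonic p L (L + 1 - k) = -sideHarmonic p L k := by
  rw [sideHarmonic, sideHarmonic, neg_sub, show (L : ℤ) + 1 - k + 1 = L + 2 - k by ring,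
    show (L : ℤ) + 2 - (L + 1 - k) = k + 1 by ring]

variable {α β : R}

lemma sideHarmonic_harmonic (hp : p = C (α + β) * X * (1 + p + p ^ 2)) {k : ℤ} (hk₀ : 0 ≤ k)
    (hkL : k ≤ L) :
    C (α + β) * X * (sideHarmonic p L (k - 1) + sideHarmonic p L k + sideHarmonic p L (k + 1))
      = sideHarmonic p L k := by
  obtain ⟨a, rfl⟩ := Int.eq_ofNat_of_zero_le hk₀
  obtain ⟨b, rfl⟩ : ∃ b, L = a + b := ⟨L - a, by omega⟩
  have hprev : sideHarmonic p (a + b) (a - 1) = p ^ a - p ^ (b + 3) := by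
    rw [sideHarmonic, show ((a : ℤ) - 1 + 1).toNat = a by omega,
      show (((a + b : ℕ) : ℤ) + 2 - (a - 1)).toNat = b + 3 by omega]
  have hnext : sideHarmonic p (a + b) (a + 1) = p ^ (a + 2) - p ^ (b + 1) := by
    rw [sideHarmonic, show ((a : ℤ) + 1 + 1).toNat = a + 2 by omega,
      show (((a + b : ℕ) : ℤ) + 2 - (a + 1)).toNat = b + 1 by omega]
  rw [hprev, hnext, sideHarmonic_natCast p (a + b) rfl]
  linear_combination (p ^ (b + 1) - p ^ a) * hp

lemma triHarmonic_harmonic (hp : p = C (α + β) * X * (1 + p + p ^ 2)) {y : ℤ × ℤ × ℤ}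
    (hy : y ∈ triangle L) :
    X * ∑ v ∈ OmegaFull, C (stepWeight α β v) * triHarmonic p L (y + v) = triHarmonic p L y := by
  obtain ⟨⟨h₁, h₂, h₃⟩, hL⟩ := mem_triangle.1 hy
  rw [planeSum_apply] at hL
  have harm := fun (k : ℤ) (hk₀ : 0 ≤ k) (hkL : k ≤ L) => sideHarmonic_harmonic p L hp hk₀ hkL
  simp only [map_add] at harm
  rw [sum_OmegaFull_stepWeight]
  simp only [triHarmonic, Prod.fst_add, Prod.snd_add, add_zero, ← sub_eq_add_neg]
  linear_combination harm y.1 h₁ (by omega) + harm y.2.1 h₂ (by omega) + harm y.2.2 h₃ (by omega)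

lemma triHarmonic_of_exit {x : ℤ × ℤ × ℤ} (hx : planeSum x = L)
    (h : x.1 = -1 ∨ x.2.1 = -1 ∨ x.2.2 = -1) : triHarmonic p L x = 1 - p ^ (L + 3) := by
  rw [planeSum_apply] at hx
  rcases h with h | h | h
  · rw [triHarmonic, h, show x.2.2 = L + 1 - x.2.1 by omega, sideHarmonic_reflect,
      sideHarmonic_neg_one]
    ring
  · rw [triHarmonic, h, show x.2.2 = L + 1 - x.1 by omega, sideHarmonic_reflect,
      sideHarmonic_neg_one]
    ring
  · rw [triHarmonic, h, show x.2.1 = L + 1 - x.1 by omega, sideHarmonic_reflect,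
      sideHarmonic_neg_one]
    ring

lemma sum_stepWeight_exit {y : ℤ × ℤ × ℤ} (hy : nonneg3 y) :
    ∑ v ∈ OmegaFull, C (stepWeight α β v) * (if nonneg3 (y + v) then 0 else 1 : R⟦X⟧)
      = C (α + β) * ((if y.1 = 0 then 1 else 0) + (if y.2.1 = 0 then 1 else 0)
          + (if y.2.2 = 0 then 1 else 0)) := by
  rw [sum_congr rfl fun v hv => by rw [nonneg3_add_iff hy hv], sum_OmegaFull_stepWeight]
  simp only [Int.reduceNeg, reduceCtorEq, false_and, not_false_eq_true, zero_eq_neg, one_ne_zero,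
    true_and, ite_not, and_self, and_true, map_add]
  ring

lemma sum_stepWeight_mul_triHarmonic_exit {y : ℤ × ℤ × ℤ} (hy : y ∈ triangle L) :
    ∑ v ∈ OmegaFull,
        C (stepWeight α β v) * (if nonneg3 (y + v) then 0 else triHarmonic p L (y + v))
      = C (α + β) * (1 - p ^ (L + 3)) * ((if y.1 = 0 then 1 else 0)
          + (if y.2.1 = 0 then 1 else 0) + (if y.2.2 = 0 then 1 else 0)) := by
  obtain ⟨hy₀, hyL⟩ := mem_triangle.1 hy
  have hexit : ∀ v ∈ OmegaFull, (if nonneg3 (y + v) then 0 else triHarmonic p L (y + v))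
      = (if nonneg3 (y + v) then 0 else 1) * (1 - p ^ (L + 3)) := fun v hv => by
    split_ifs with h
    · rw [zero_mul]
    · rw [one_mul, triHarmonic_of_exit p L (by
        rw [map_add, planeSum_eq_zero_of_mem hv, hyL, add_zero])]
      rw [nonneg3_add_iff hy₀ hv] at h
      simp only [Prod.fst_add, Prod.snd_add]
      omega
  rw [sum_congr rfl fun v hv => by rw [hexit v hv, ← mul_assoc], ← sum_mul,
    sum_stepWeight_exit hy₀]
  ring

theorem triHarmonic_eq_boundary_walkGF (hp : p = C (α + β) * X * (1 + p + p ^ 2))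
    {x₀ : ℤ × ℤ × ℤ} (hx₀ : x₀ ∈ triangle L) :
    triHarmonic p L x₀ = C (α + β) * X * (1 - p ^ (L + 3)) *
      ((∑ y ∈ (triangle L).filter (fun y => y.1 = 0), walkGF α β x₀ y)
        + (∑ y ∈ (triangle L).filter (fun y => y.2.1 = 0), walkGF α β x₀ y)
        + (∑ y ∈ (triangle L).filter (fun y => y.2.2 = 0), walkGF α β x₀ y)) := by
  obtain ⟨h₀, hL⟩ := mem_triangle.1 hx₀
  have hshift : ∀ v ∈ OmegaFull, ∑ y ∈ triangle L, triHarmonic p L y * walkGF α β x₀ (y - v)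
      = ∑ z ∈ triangle L, triHarmonic p L (z + v) * walkGF α β x₀ z
        - ∑ z ∈ triangle L, (if nonneg3 (z + v) then 0 else triHarmonic p L (z + v))
            * walkGF α β x₀ z := fun v hv => by
    rw [sum_mul_walkGF_sub α β hL _ hv, ← sum_sub_distrib]
    exact sum_congr rfl fun z _ => by split_ifs <;> ring
  have hharm : X * ∑ v ∈ OmegaFull, C (stepWeight α β v) *
      ∑ z ∈ triangle L, triHarmonic p L (z + v) * walkGF α β x₀ z
        = ∑ z ∈ triangle L, triHarmonic p L z * walkGF α β x₀ z := by
    simp only [mul_sum]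
    rw [sum_comm]
    refine sum_congr rfl fun z hz => ?_
    rw [← triHarmonic_harmonic p L hp hz, mul_sum, sum_mul]
    exact sum_congr rfl fun v _ => by ring
  have hexit : ∑ v ∈ OmegaFull, C (stepWeight α β v) * ∑ z ∈ triangle L,
      (if nonneg3 (z + v) then 0 else triHarmonic p L (z + v)) * walkGF α β x₀ z
        = C (α + β) * (1 - p ^ (L + 3)) *
          ∑ z ∈ triangle L, ((if z.1 = 0 then 1 else 0) + (if z.2.1 = 0 then 1 else 0)
            + (if z.2.2 = 0 then 1 else 0)) * walkGF α β x₀ z := by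
    simp only [mul_sum]
    rw [sum_comm]
    refine sum_congr rfl fun z hz => ?_
    rw [← mul_assoc, ← sum_stepWeight_mul_triHarmonic_exit p L hz, sum_mul]
    exact sum_congr rfl fun v _ => by ring
  have hbdry : ∑ z ∈ triangle L, ((if z.1 = 0 then 1 else 0) + (if z.2.1 = 0 then 1 else 0)
      + (if z.2.2 = 0 then 1 else 0)) * walkGF α β x₀ z
        = (∑ y ∈ (triangle L).filter (fun y => y.1 = 0), walkGF α β x₀ y)
          + (∑ y ∈ (triangle L).filter (fun y => y.2.1 = 0), walkGF α β x₀ y)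
          + (∑ y ∈ (triangle L).filter (fun y => y.2.2 = 0), walkGF α β x₀ y) := by
    simp only [add_mul, ite_mul, one_mul, zero_mul, sum_add_distrib, sum_filter]
  have hmaster :=
    (sum_mul_walkGF α β h₀ (triHarmonic p L) hx₀ fun y hy => (mem_triangle.1 hy).1).symm
  rw [sum_congr rfl fun v hv => by rw [hshift v hv]] at hmaster
  simp only [mul_sub, sum_sub_distrib] at hmaster
  rw [hharm, hexit, hbdry] at hmaster
  linear_combination hmaster

end Harmonic

theorem triangle_boundary_gf_general (u v w : ℕ) (α β : ℚ) (p : PowerSeries ℚ)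
    (hp : p = PowerSeries.C (α + β) * PowerSeries.X * (1 + p + p ^ 2)) :
    PowerSeries.C (α + β) * PowerSeries.X *
        ((PowerSeries.mk fun n =>
            ∑ s ∈ (triWalks ((u : ℤ), (v : ℤ), (w : ℤ)) n).filter
                (fun s => (triPos ((u : ℤ), (v : ℤ), (w : ℤ)) s n).1 = 0),
              α ^ countA s * β ^ countB s) +
          (PowerSeries.mk fun n =>
            ∑ s ∈ (triWalks ((u : ℤ), (v : ℤ), (w : ℤ)) n).filter
                (fun s => (triPos ((u : ℤ), (v : ℤ), (w : ℤ)) s n).2.1 = 0),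
              α ^ countA s * β ^ countB s) +
          (PowerSeries.mk fun n =>
            ∑ s ∈ (triWalks ((u : ℤ), (v : ℤ), (w : ℤ)) n).filter
                (fun s => (triPos ((u : ℤ), (v : ℤ), (w : ℤ)) s n).2.2 = 0),
              α ^ countA s * β ^ countB s)) *
        (1 - p ^ (u + v + w + 3))
      = p ^ (u + 1) + p ^ (v + 1) + p ^ (w + 1)
          - p ^ (v + w + 2) - p ^ (u + w + 2) - p ^ (u + v + 2) := by
  have hL : planeSum ((u : ℤ), (v : ℤ), (w : ℤ)) = ((u + v + w : ℕ) : ℤ) := by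
    rw [planeSum_apply]; push_cast; rfl
  have hx₀ : ((u : ℤ), (v : ℤ), (w : ℤ)) ∈ triangle (u + v + w) :=
    mem_triangle.2 ⟨⟨u.cast_nonneg, v.cast_nonneg, w.cast_nonneg⟩, hL⟩
  have hψ : triHarmonic p (u + v + w) ((u : ℤ), (v : ℤ), (w : ℤ))
      = p ^ (u + 1) + p ^ (v + 1) + p ^ (w + 1)
          - p ^ (v + w + 2) - p ^ (u + w + 2) - p ^ (u + v + 2) := by
    rw [triHarmonic, sideHarmonic_natCast p _ (b := v + w) (by ring),
      sideHarmonic_natCast p _ (b := u + w) (by ring),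
      sideHarmonic_natCast p _ (b := u + v) (by ring)]
    ring
  rw [mk_sum_filter_triWalks α β hL (fun y => y.1), mk_sum_filter_triWalks α β hL (fun y => y.2.1),
    mk_sum_filter_triWalks α β hL (fun y => y.2.2), ← hψ, triHarmonic_eq_boundary_walkGF p _ hp hx₀]
  ring

/-- The combined weighted generating function of triangle-model walks
starting at `(u,v,w)` and ending on one of the three sides of the triangle. -/
theorem triangle_boundary_gf (u v w : ℕ) (α β : ℚ) (p : PowerSeries ℚ)
    (hp0 : PowerSeries.constantCoeff p = 0)
    (hp : p = PowerSeries.C (α + β) * PowerSeries.X * (1 + p + p ^ 2)) :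
    PowerSeries.C (α + β) * PowerSeries.X *
        ((PowerSeries.mk fun n =>
            ∑ s ∈ (triWalks ((u : ℤ), (v : ℤ), (w : ℤ)) n).filter
                (fun s => (triPos ((u : ℤ), (v : ℤ), (w : ℤ)) s n).1 = 0),
              α ^ countA s * β ^ countB s) +
          (PowerSeries.mk fun n =>
            ∑ s ∈ (triWalks ((u : ℤ), (v : ℤ), (w : ℤ)) n).filter
                (fun s => (triPos ((u : ℤ), (v : ℤ), (w : ℤ)) s n).2.1 = 0),
              α ^ countA s * β ^ countB s) +
          (PowerSeries.mk fun n =>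
            ∑ s ∈ (triWalks ((u : ℤ), (v : ℤ), (w : ℤ)) n).filter
                (fun s => (triPos ((u : ℤ), (v : ℤ), (w : ℤ)) s n).2.2 = 0),
              α ^ countA s * β ^ countB s)) *
        (1 - p ^ (u + v + w + 3))
      = p ^ (u + 1) + p ^ (v + 1) + p ^ (w + 1)
          - p ^ (v + w + 2) - p ^ (u + w + 2) - p ^ (u + v + 2) :=
  triangle_boundary_gf_general u v w α β p hp
end

section
/- Fix weights α, β ∈ ℚ, set s = (α+β)·t ∈ ℚ[[t]], and for each L ∈ ℕ define F_L = (1−p^3)·(1−p^(L+1))·((1−p)·(1−p^(L+3)))⁻¹ ∈ ℚ[[t]] (the factors 1−p and 1−p^(L+3) have constant term 1 and hence are invertible in ℚ[[t]]). Then for every L ∈ ℕ the continued-fraction recursion F_(L+2)·(1 − s − s²·F_L) = 1 holds in ℚ[[t]], and moreover F_0 = 1 and F_1·(1−s) = 1. -/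
/-!
Writing `q = 1 + p + p²`, the equation `p = s q` says `s = p / q = p (1 - p) / (1 - p³)`, so every
claim is an identity between rational functions of `p`. Clearing the denominators
`(1 - p)(1 - p^(L+3))` and `q`, which are units because `p` has no constant term, turns each claim
into a polynomial identity in `p` and `p^(L+1)`.
-/

section ContinuedFraction

variable {R : Type*} [CommRing R] {s p : R}

theorem isUnit_one_add_add_sq (hunit : ∀ n : ℕ, IsUnit (1 - p ^ (n + 1))) :
    IsUnit (1 + p + p ^ 2) :=
  isUnit_of_mul_isUnit_right (x := 1 - p) <| by
    simpa [show (1 - p) * (1 + p + p ^ 2) = 1 - p ^ 3 by ring] using hunit 2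

theorem continuedFraction_zero {f : R} (hunit : ∀ n : ℕ, IsUnit (1 - p ^ (n + 1)))
    (hf : f * ((1 - p) * (1 - p ^ 3)) = (1 - p ^ 3) * (1 - p)) :
    f = 1 :=
  ((hunit 0).mul (hunit 2)).mul_eq_right.mp <| by simpa [mul_comm (1 - p ^ 3)] using hf

theorem continuedFraction_one {f : R} (hs : s * (1 + p + p ^ 2) = p)
    (hunit : ∀ n : ℕ, IsUnit (1 - p ^ (n + 1)))
    (hf : f * ((1 - p) * (1 - p ^ 4)) = (1 - p ^ 3) * (1 - p ^ 2)) :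
    f * (1 - s) = 1 := by
  have hW : IsUnit ((1 - p) * (1 - p ^ 4) * (1 + p + p ^ 2)) := by
    simpa using ((hunit 0).mul (hunit 3)).mul (isUnit_one_add_add_sq hunit)
  refine hW.mul_right_cancel ?_
  calc f * (1 - s) * ((1 - p) * (1 - p ^ 4) * (1 + p + p ^ 2))
      = f * ((1 - p) * (1 - p ^ 4)) * (1 + p + p ^ 2 - s * (1 + p + p ^ 2)) := by ring
    _ = (1 - p ^ 3) * (1 - p ^ 2) * (1 + p + p ^ 2 - p) := by rw [hf, hs]
    _ = 1 * ((1 - p) * (1 - p ^ 4) * (1 + p + p ^ 2)) := by ring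

theorem continuedFraction_step {f f₂ : R} (L : ℕ) (hs : s * (1 + p + p ^ 2) = p)
    (hunit : ∀ n : ℕ, IsUnit (1 - p ^ (n + 1)))
    (hf : f * ((1 - p) * (1 - p ^ (L + 3))) = (1 - p ^ 3) * (1 - p ^ (L + 1)))
    (hf₂ : f₂ * ((1 - p) * (1 - p ^ (L + 5))) = (1 - p ^ 3) * (1 - p ^ (L + 3))) :
    f₂ * (1 - s - s ^ 2 * f) = 1 := by
  have hunit₁ : IsUnit (1 - p) := by simpa using hunit 0
  have hW := ((hunit₁.mul (hunit (L + 4))).mul (hunit₁.mul (hunit (L + 2)))).mul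
    ((isUnit_one_add_add_sq hunit).pow 2)
  refine hW.mul_right_cancel ?_
  calc f₂ * (1 - s - s ^ 2 * f) * ((1 - p) * (1 - p ^ (L + 5)) * ((1 - p) * (1 - p ^ (L + 3))) *
        (1 + p + p ^ 2) ^ 2)
      = f₂ * ((1 - p) * (1 - p ^ (L + 5))) *
          ((1 + p + p ^ 2 - s * (1 + p + p ^ 2)) * (1 + p + p ^ 2) * ((1 - p) * (1 - p ^ (L + 3)))
            - (s * (1 + p + p ^ 2)) ^ 2 * (f * ((1 - p) * (1 - p ^ (L + 3))))) := by ring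
    _ = (1 - p ^ 3) * (1 - p ^ (L + 3)) *
          ((1 + p + p ^ 2 - p) * (1 + p + p ^ 2) * ((1 - p) * (1 - p ^ (L + 3)))
            - p ^ 2 * ((1 - p ^ 3) * (1 - p ^ (L + 1)))) := by rw [hf₂, hf, hs]
    _ = 1 * ((1 - p) * (1 - p ^ (L + 5)) * ((1 - p) * (1 - p ^ (L + 3))) * (1 + p + p ^ 2) ^ 2) := by
      ring

end ContinuedFraction

theorem PowerSeries.isUnit_one_sub_pow_succ {R : Type*} [CommRing R] {p : PowerSeries R}
    (hp0 : constantCoeff p = 0) (n : ℕ) : IsUnit (1 - p ^ (n + 1)) :=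
  isUnit_iff_constantCoeff.mpr <| by simp [hp0]

/-- The closed-form corner generating functions
`F_L = (1-p³)(1-p^(L+1)) / ((1-p)(1-p^(L+3)))` satisfy the continued-fraction recursion
`F_(L+2) (1 - s - s² F_L) = 1` with `F_0 = 1` and `F_1 (1-s) = 1`, where
`s = (α+β) t`. -/
theorem corner_gf_continued_fraction (α β : ℚ) (p : PowerSeries ℚ)
    (hp0 : PowerSeries.constantCoeff p = 0)
    (hp : p = PowerSeries.C (α + β) * PowerSeries.X * (1 + p + p ^ 2)) :
    let s : PowerSeries ℚ := PowerSeries.C (α + β) * PowerSeries.X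
    let F : ℕ → PowerSeries ℚ := fun L =>
      (1 - p ^ 3) * (1 - p ^ (L + 1)) * ((1 - p) * (1 - p ^ (L + 3)))⁻¹
    (∀ L : ℕ, F (L + 2) * (1 - s - s ^ 2 * F L) = 1) ∧ F 0 = 1 ∧ F 1 * (1 - s) = 1 := by
  intro s F
  have hunit := PowerSeries.isUnit_one_sub_pow_succ hp0
  have hF (L : ℕ) : F L * ((1 - p) * (1 - p ^ (L + 3))) = (1 - p ^ 3) * (1 - p ^ (L + 1)) :=
    (PowerSeries.eq_mul_inv_iff_mul_eq (by simp [hp0])).mp rfl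
  exact ⟨fun L => continuedFraction_step L hp.symm hunit (hF L) (hF (L + 2)),
    continuedFraction_zero hunit (by simpa using hF 0), continuedFraction_one hp.symm hunit (hF 1)⟩
end
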